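/- arXiv:1412.5789 — 6 statements merged into one kernel-verified Lean document; each statement's English description precedes it below -/
import Mathlib

section
/- Fix j ∈ {1,2}, ρ ≥ 1, μ ∈ (0,1] and an integer N ≥ 1. Then for all s > 0 and all ω > 0, |φ_N^{(j)}(s,ω,ρ,μ)| ≤ (1/((N−1)! ρ)) Γ(N/ρ) s^{μ−1} ω^{−N/ρ}. -/
/-!
STATEMENT 1: For j ∈ {1,2}, ρ ≥ 1, μ ∈ (0,1] and an integer N ≥ 1, for all s > 0 and ω > 0,
|φ_N^{(j)}(s,ω,ρ,μ)| ≤ (1/((N−1)! ρ)) Γ(N/ρ) s^{μ−1} ω^{−N/ρ}.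
-/

open MeasureTheory

/-- The sign (−1)^{j+1}: +1 for j = 1, −1 for j = 2. -/
noncomputable def esgn (j : ℕ) : ℝ := if j = 1 then 1 else -1

/-- The unit direction e^{(−1)^{j+1} iπ/(2ρ)} of the half-line Λ^{(j)}. -/
noncomputable def edir (j : ℕ) (ρ : ℝ) : ℂ :=
  Complex.exp ((esgn j * (Real.pi / (2 * ρ)) : ℝ) * Complex.I)

/-- The integrand of φ_{n+1}^{(j)}(s,ω,ρ,μ), parametrizing Λ^{(j)}(s) by z = s + t·e^{(−1)^{j+1}iπ/(2ρ)},
    t ≥ 0 (principal-branch complex powers). -/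
noncomputable def phiInt (j n : ℕ) (s ω ρ μ : ℝ) (t : ℝ) : ℂ :=
  (((s : ℂ) + (t : ℂ) * edir j ρ) - (s : ℂ)) ^ n *
    ((s : ℂ) + (t : ℂ) * edir j ρ) ^ ((μ : ℂ) - 1) *
    Complex.exp ((esgn j : ℂ) * Complex.I * (ω : ℂ) *
      ((s : ℂ) + (t : ℂ) * edir j ρ) ^ (ρ : ℂ)) *
    edir j ρ

/-- φ_{n+1}^{(j)}(s,ω,ρ,μ) := ((−1)^{n+1}/n!) ∫_{Λ^{(j)}(s)} (z−s)^n z^{μ−1} e^{(−1)^{j+1}iωz^ρ} dz. -/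
noncomputable def phiE (j n : ℕ) (s ω ρ μ : ℝ) : ℂ :=
  ((-1 : ℂ) ^ (n + 1) / (n.factorial : ℂ)) * ∫ t in Set.Ioi (0 : ℝ), phiInt j n s ω ρ μ t

/-!
Write the point of Λ^{(1)}(s) at parameter t as z = s + t e^{iθ} with θ = π/(2ρ) ≤ π/2; the
integrand on Λ^{(2)}(s) is the complex conjugate of that on Λ^{(1)}(s). Then |z − s| = t, and
|z| ≥ Re z ≥ s gives |z^{μ−1}| ≤ s^{μ−1} since μ ≤ 1. The exponential factor has modulus
e^{−ω Im z^ρ}, and Im z^ρ ≥ t^ρ: for s = 0 one has z^ρ = i t^ρ, and x ↦ Im (x + t e^{iθ})^ρ is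
nondecreasing on [0, ∞) because its derivative ρ |z|^{ρ−1} sin((ρ−1) arg z) is nonnegative, as
0 ≤ arg z ≤ θ. So the integrand is bounded by s^{μ−1} t^n e^{−ω t^ρ}, whose integral over (0, ∞) is
Γ((n+1)/ρ) ω^{−(n+1)/ρ} / ρ.
-/

open Complex Set MeasureTheory
open scoped Real ComplexConjugate

section Ray

variable {s t θ : ℝ}

theorem re_add_mul_exp_mul_I : ((s : ℂ) + t * exp (θ * I)).re = s + t * Real.cos θ := by
  simp [exp_ofReal_mul_I_re, exp_ofReal_mul_I_im]

theorem im_add_mul_exp_mul_I : ((s : ℂ) + t * exp (θ * I)).im = t * Real.sin θ := by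
  simp [exp_ofReal_mul_I_re, exp_ofReal_mul_I_im]

theorem im_add_mul_exp_mul_I_pos (hθ : θ ∈ Ioo 0 π) (ht : 0 < t) :
    0 < ((s : ℂ) + t * exp (θ * I)).im := by
  rw [im_add_mul_exp_mul_I]
  exact mul_pos ht (Real.sin_pos_of_pos_of_lt_pi hθ.1 hθ.2)

theorem le_norm_add_mul_exp_mul_I (hθ : θ ∈ Icc (-(π / 2)) (π / 2)) (ht : 0 ≤ t) :
    s ≤ ‖(s : ℂ) + t * exp (θ * I)‖ :=
  calc s ≤ s + t * Real.cos θ :=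
        le_add_of_nonneg_right (mul_nonneg ht (Real.cos_nonneg_of_mem_Icc hθ))
    _ = ((s : ℂ) + t * exp (θ * I)).re := re_add_mul_exp_mul_I.symm
    _ ≤ _ := re_le_norm _

theorem norm_add_mul_exp_mul_I_le (hs : 0 ≤ s) (ht : 0 ≤ t) :
    ‖(s : ℂ) + t * exp (θ * I)‖ ≤ s + t := by
  refine (norm_add_le _ _).trans_eq ?_
  simp [norm_exp_ofReal_mul_I, abs_of_nonneg hs, abs_of_nonneg ht]

theorem arg_add_mul_exp_mul_I_le (hθ : θ ∈ Ioc 0 (π / 2)) (hs : 0 ≤ s) (ht : 0 < t) :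
    arg ((s : ℂ) + t * exp (θ * I)) ≤ θ := by
  set z := (s : ℂ) + t * exp (θ * I)
  have him : 0 < z.im := im_add_mul_exp_mul_I_pos ⟨hθ.1, by linarith [hθ.2, Real.pi_pos]⟩ ht
  have hz : 0 < ‖z‖ := norm_pos_iff.2 fun h => by simp [h] at him
  have hcos : Real.cos θ ≤ Real.cos (arg z) := by
    rw [cos_arg (norm_pos_iff.1 hz), le_div_iff₀ hz, re_add_mul_exp_mul_I]
    have := norm_add_mul_exp_mul_I_le (θ := θ) hs ht.le
    have hcos₀ := Real.cos_nonneg_of_mem_Icc ⟨by linarith [hθ.1, Real.pi_pos], hθ.2⟩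
    nlinarith [Real.cos_le_one θ]
  exact (Real.strictAntiOn_cos.le_iff_ge ⟨hθ.1.le, by linarith [hθ.2, Real.pi_pos]⟩
    ⟨arg_nonneg_iff.2 him.le, arg_le_pi z⟩).1 hcos

variable {ρ : ℝ}

theorem monotoneOn_im_cpow_add_mul_exp_mul_I (hρ : 1 ≤ ρ) (hθ : θ ∈ Ioc 0 (π / 2))
    (hρθ : (ρ - 1) * θ ≤ π) (ht : 0 < t) :
    MonotoneOn (fun x : ℝ => (((x : ℂ) + t * exp (θ * I)) ^ (ρ : ℂ)).im) (Ici 0) := by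
  set w := (t : ℂ) * exp (θ * I)
  have hθπ : θ ∈ Ioo 0 π := ⟨hθ.1, by linarith [hθ.2, Real.pi_pos]⟩
  have hder (x : ℝ) : HasDerivAt (fun x : ℝ => (((x : ℂ) + w) ^ (ρ : ℂ)).im)
      ((ρ * ((x : ℂ) + w) ^ ((ρ : ℂ) - 1) * 1).im) x := by
    have hslit : (x : ℂ) + w ∈ slitPlane :=
      mem_slitPlane_iff.2 (Or.inr (im_add_mul_exp_mul_I_pos hθπ ht).ne')
    exact imCLM.hasFDerivAt.comp_hasDerivAt x
      ((hasStrictDerivAt_cpow_const hslit).hasDerivAt.comp x (ofRealCLM.hasDerivAt.add_const w))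
  refine monotoneOn_of_hasDerivWithinAt_nonneg (convex_Ici 0)
    (fun x _ => (hder x).continuousAt.continuousWithinAt)
    (fun x _ => (hder x).hasDerivWithinAt) fun x hx => ?_
  rw [interior_Ici] at hx
  have harg₀ : 0 ≤ arg ((x : ℂ) + w) := arg_nonneg_iff.2 (im_add_mul_exp_mul_I_pos hθπ ht).le
  have hargθ : arg ((x : ℂ) + w) ≤ θ := arg_add_mul_exp_mul_I_le hθ hx.le ht
  rw [mul_one, im_ofReal_mul, ← ofReal_one, ← ofReal_sub, cpow_ofReal_im]
  refine mul_nonneg (by linarith) (mul_nonneg (Real.rpow_nonneg (norm_nonneg _) _)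
    (Real.sin_nonneg_of_nonneg_of_le_pi (mul_nonneg harg₀ (by linarith)) ?_))
  nlinarith

theorem rpow_mul_sin_le_im_cpow (hρ : 1 ≤ ρ) (hθ : θ ∈ Ioc 0 (π / 2)) (hρθ : (ρ - 1) * θ ≤ π)
    (hs : 0 ≤ s) (ht : 0 < t) :
    t ^ ρ * Real.sin (θ * ρ) ≤ (((s : ℂ) + t * exp (θ * I)) ^ (ρ : ℂ)).im := by
  have harg : arg ((t : ℂ) * exp (θ * I)) = θ := by
    rw [exp_mul_I]
    exact arg_mul_cos_add_sin_mul_I ht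
      ⟨by linarith [hθ.1, Real.pi_pos], by linarith [hθ.2, Real.pi_pos]⟩
  have h₀ := monotoneOn_im_cpow_add_mul_exp_mul_I hρ hθ hρθ ht self_mem_Ici hs hs
  simpa [cpow_ofReal_im, harg, norm_exp_ofReal_mul_I, abs_of_pos ht] using h₀

end Ray

section Phi

variable {j : ℕ} {s ω ρ μ t : ℝ}

theorem edir_one : edir 1 ρ = exp ((π / (2 * ρ) : ℝ) * I) := by
  simp [edir, esgn]

theorem edir_of_ne_one (hj : j ≠ 1) : edir j ρ = conj (exp ((π / (2 * ρ) : ℝ) * I)) := by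
  rw [edir, ← exp_conj, map_mul, conj_ofReal, conj_I]
  simp [esgn, hj]

theorem phiInt_of_ne_one (hj : j ≠ 1) (n : ℕ) (hρ : 1 / 2 < ρ) (ht : 0 < t) :
    phiInt j n s ω ρ μ t = conj (phiInt 1 n s ω ρ μ t) := by
  set z := (s : ℂ) + t * exp ((π / (2 * ρ) : ℝ) * I)
  have hθ : π / (2 * ρ) ∈ Ioo 0 π := by
    refine ⟨by positivity, (div_lt_iff₀ (by linarith)).2 ?_⟩
    nlinarith [Real.pi_pos]
  have harg : arg z ≠ π := fun h => (im_add_mul_exp_mul_I_pos hθ ht).ne' (arg_eq_pi_iff.1 h).2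
  have hconj (c : ℂ) (hc : conj c = c) : conj z ^ c = conj (z ^ c) := by
    rw [conj_cpow _ _ harg, hc]
  have hzconj : (s : ℂ) + t * conj (exp ((π / (2 * ρ) : ℝ) * I)) = conj z := by simp [z]
  rw [phiInt, phiInt, edir_one, edir_of_ne_one hj, hzconj, hconj _ (by simp), hconj _ (by simp)]
  simp only [map_mul, map_pow, map_sub, conj_ofReal, ← exp_conj, conj_I, esgn, if_neg hj, if_pos]
  simp only [z, ofReal_neg, ofReal_one, neg_mul, one_mul, mul_neg]

theorem norm_phiInt_one (n : ℕ) (ht : 0 ≤ t) :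
    ‖phiInt 1 n s ω ρ μ t‖ = t ^ n * ‖(s : ℂ) + t * exp ((π / (2 * ρ) : ℝ) * I)‖ ^ (μ - 1) *
      Real.exp (-(ω * (((s : ℂ) + t * exp ((π / (2 * ρ) : ℝ) * I)) ^ (ρ : ℂ)).im)) := by
  have hμ₁ : (μ : ℂ) - 1 = ((μ - 1 : ℝ) : ℂ) := by push_cast; ring
  have hre (w : ℂ) : ((esgn 1 : ℂ) * I * ω * w).re = -(ω * w.im) := by simp [esgn]
  rw [phiInt, edir_one, add_sub_cancel_left, hμ₁, norm_mul, norm_mul, norm_mul, norm_pow,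
    norm_mul, norm_exp_ofReal_mul_I, norm_real, Real.norm_of_nonneg ht, norm_cpow_real,
    norm_exp, hre, mul_one, mul_one]

theorem norm_phiInt_one_le (n : ℕ) (hρ : 1 ≤ ρ) (hμ : μ ≤ 1) (hs : 0 < s) (hω : 0 ≤ ω)
    (ht : 0 < t) :
    ‖phiInt 1 n s ω ρ μ t‖ ≤ s ^ (μ - 1) * (t ^ n * Real.exp (-ω * t ^ ρ)) := by
  set θ := π / (2 * ρ)
  set z := (s : ℂ) + t * exp (θ * I)
  have hθρ : θ * ρ = π / 2 := by simp only [θ]; field_simp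
  have hθ : θ ∈ Ioc 0 (π / 2) :=
    ⟨by positivity, by rw [← hθρ]; exact le_mul_of_one_le_right (by positivity) hρ⟩
  have hρθ : (ρ - 1) * θ ≤ π := by nlinarith [hθ.1, Real.pi_pos]
  have him : t ^ ρ ≤ (z ^ (ρ : ℂ)).im := by
    simpa [hθρ] using rpow_mul_sin_le_im_cpow hρ hθ hρθ hs.le ht
  have hz : ‖z‖ ^ (μ - 1) ≤ s ^ (μ - 1) :=
    Real.rpow_le_rpow_of_nonpos hs
      (le_norm_add_mul_exp_mul_I ⟨by linarith [hθ.1, Real.pi_pos], hθ.2⟩ ht.le) (by linarith)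
  calc ‖phiInt 1 n s ω ρ μ t‖ = t ^ n * ‖z‖ ^ (μ - 1) * Real.exp (-(ω * (z ^ (ρ : ℂ)).im)) :=
        norm_phiInt_one n ht.le
    _ ≤ t ^ n * s ^ (μ - 1) * Real.exp (-(ω * t ^ ρ)) := by gcongr
    _ = s ^ (μ - 1) * (t ^ n * Real.exp (-ω * t ^ ρ)) := by rw [neg_mul]; ring

theorem norm_phiInt_le (j n : ℕ) (hρ : 1 ≤ ρ) (hμ : μ ≤ 1) (hs : 0 < s) (hω : 0 ≤ ω)
    (ht : 0 < t) :
    ‖phiInt j n s ω ρ μ t‖ ≤ s ^ (μ - 1) * (t ^ n * Real.exp (-ω * t ^ ρ)) := by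
  obtain rfl | hj := eq_or_ne j 1
  · exact norm_phiInt_one_le n hρ hμ hs hω ht
  · rw [phiInt_of_ne_one hj n (by linarith) ht, RCLike.norm_conj]
    exact norm_phiInt_one_le n hρ hμ hs hω ht

theorem norm_integral_phiInt_le (j n : ℕ) (hρ : 1 ≤ ρ) (hμ : μ ≤ 1) (hs : 0 < s) (hω : 0 < ω) :
    ‖∫ t in Ioi 0, phiInt j n s ω ρ μ t‖ ≤
      s ^ (μ - 1) * (ω ^ (-((n : ℝ) + 1) / ρ) * (1 / ρ) * Real.Gamma (((n : ℝ) + 1) / ρ)) := by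
  have hn : (-1 : ℝ) < n := by linarith [n.cast_nonneg (α := ℝ)]
  rw [← integral_rpow_mul_exp_neg_mul_rpow (by linarith) hn hω, ← integral_const_mul]
  refine norm_integral_le_of_norm_le
    ((integrableOn_rpow_mul_exp_neg_mul_rpow hn (by linarith) hω).const_mul _) ?_
  filter_upwards [ae_restrict_mem measurableSet_Ioi] with t ht
  rw [Real.rpow_natCast]
  exact norm_phiInt_le j n hρ hμ hs hω.le ht

end Phi

theorem statement1_general (j : ℕ) (ρ : ℝ) (hρ : 1 ≤ ρ)
    (μ : ℝ) (hμ : μ ∈ Set.Ioc (0 : ℝ) 1) (N : ℕ) (hN : 1 ≤ N) :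
    ∀ s > (0 : ℝ), ∀ ω > (0 : ℝ),
      ‖phiE j (N - 1) s ω ρ μ‖ ≤
        (1 / (((N - 1).factorial : ℝ) * ρ)) * Real.Gamma ((N : ℝ) / ρ) *
          s ^ (μ - 1) * ω ^ (-(N : ℝ) / ρ) := by
  intro s hs ω hω
  obtain ⟨n, rfl⟩ : ∃ n, N = n + 1 := ⟨N - 1, by omega⟩
  have hcoeff : ‖(-1 : ℂ) ^ (n + 1) / (n.factorial : ℂ)‖ = 1 / n.factorial := by simp
  rw [Nat.add_sub_cancel, phiE, norm_mul, hcoeff]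
  calc 1 / (n.factorial : ℝ) * ‖∫ t in Ioi 0, phiInt j n s ω ρ μ t‖
      ≤ 1 / n.factorial * (s ^ (μ - 1) *
          (ω ^ (-((n : ℝ) + 1) / ρ) * (1 / ρ) * Real.Gamma (((n : ℝ) + 1) / ρ))) := by
        gcongr
        exact norm_integral_phiInt_le j n hρ hμ.2 hs hω
    _ = _ := by push_cast; ring

theorem statement1 (j : ℕ) (hj : j = 1 ∨ j = 2) (ρ : ℝ) (hρ : 1 ≤ ρ)
    (μ : ℝ) (hμ : μ ∈ Set.Ioc (0 : ℝ) 1) (N : ℕ) (hN : 1 ≤ N) :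
    ∀ s > (0 : ℝ), ∀ ω > (0 : ℝ),
      ‖phiE j (N - 1) s ω ρ μ‖ ≤
        (1 / (((N - 1).factorial : ℝ) * ρ)) * Real.Gamma ((N : ℝ) / ρ) *
          s ^ (μ - 1) * ω ^ (-(N : ℝ) / ρ) :=
  statement1_general j ρ hρ μ hμ N hN
end

section
/- Fix j ∈ {1,2}, ρ ≥ 1 and an integer N ≥ 1, and consider the regular-amplitude case μ = 1. Then for all s > 0 and ω > 0 the following two estimates hold: (i) |φ_N^{(j)}(s,ω,ρ,1)| ≤ a_{N,ρ} ω^{−N/ρ}, where a_{N,ρ} := (1/((N−1)! ρ)) Γ(N/ρ); (ii) |φ_N^{(j)}(s,ω,ρ,1)| ≤ b_{N,ρ} ω^{−(1+(N−1)/ρ)} s^{1−ρ} + c_{N,ρ} ω^{−(1+N/ρ)} s^{−ρ}, where b_{1,ρ} := ρ^{−1} and c_{1,ρ} := ((ρ−1)/ρ²) Γ(1/ρ) if N = 1, and b_{N,ρ} := (1/(ρ²(N−2)!)) Γ((N−1)/ρ) and c_{N,ρ} := ((ρ−1)/(ρ²(N−1)!)) Γ(N/ρ) if N ≥ 2. 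-/
/-!
STATEMENT 3: Fix j ∈ {1,2}, ρ ≥ 1 and an integer N ≥ 1, in the regular-amplitude case μ = 1.
Then for all s > 0 and ω > 0:
(i)  |φ_N^{(j)}(s,ω,ρ,1)| ≤ a_{N,ρ} ω^{−N/ρ} with a_{N,ρ} = (1/((N−1)! ρ)) Γ(N/ρ);
(ii) |φ_N^{(j)}(s,ω,ρ,1)| ≤ b_{N,ρ} ω^{−(1+(N−1)/ρ)} s^{1−ρ} + c_{N,ρ} ω^{−(1+N/ρ)} s^{−ρ},
with b_{1,ρ} = ρ⁻¹, c_{1,ρ} = ((ρ−1)/ρ²) Γ(1/ρ), and for N ≥ 2,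
b_{N,ρ} = (1/(ρ²(N−2)!)) Γ((N−1)/ρ), c_{N,ρ} = ((ρ−1)/(ρ²(N−1)!)) Γ(N/ρ).
-/
open MeasureTheory

open Real Set Filter Topology

/-!
Write `z = s + t e` with `e = e^{±iπ/(2ρ)}`, `t ≥ 0`, for the points of `Λ^{(j)}(s)`. The whole
estimate rests on `±Im z^ρ ≥ t^ρ`: there is equality at `s = 0`, and `s ↦ ±Im z^ρ` is
nondecreasing because its derivative `ρ · ±Im z^{ρ-1}` is nonnegative, `±arg z` staying in
`[0, π/(2ρ)]`. So the integrand of `φ_{n+1}` is bounded by `t^n e^{-ωt^ρ}`, whose integral is a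
Gamma value, which is (i).

For (ii) write `e^{±iωz^ρ} = (±iωρe)⁻¹ z^{1-ρ} · d/dt e^{±iωz^ρ}` and integrate by parts. The
boundary term at `t = 0` is `0` for `n ≥ 1` and of size at most `s^{1-ρ}` for `n = 0`; in the
remainder, `|z| ≥ s` bounds `|z^{1-ρ}|` and `|z^{-ρ}|` by `s^{1-ρ}` and `s^{-ρ}`, leaving again
integrals of `t^k e^{-ωt^ρ}`.
-/

lemma esgn_eq_one_or_neg_one (j : ℕ) : esgn j = 1 ∨ esgn j = -1 := by
  unfold esgn; split_ifs <;> simp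

section Ray

variable {j : ℕ} {ρ σ s t : ℝ}

lemma pi_div_two_mul_pos (hρ : 1 ≤ ρ) : 0 < π / (2 * ρ) := by
  have := pi_pos; positivity

lemma pi_div_two_mul_le (hρ : 1 ≤ ρ) : π / (2 * ρ) ≤ π / 2 :=
  div_le_div_of_nonneg_left pi_pos.le two_pos (by linarith)

lemma pi_div_two_mul_mul_self (hρ : 1 ≤ ρ) : π / (2 * ρ) * ρ = π / 2 := by
  field_simp [show ρ ≠ 0 by linarith]

lemma cos_pi_div_two_mul_nonneg (hρ : 1 ≤ ρ) : 0 ≤ cos (π / (2 * ρ)) :=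
  cos_nonneg_of_neg_pi_div_two_le_of_le (by linarith [pi_pos, pi_div_two_mul_pos hρ])
    (pi_div_two_mul_le hρ)

lemma sin_pi_div_two_mul_pos (hρ : 1 ≤ ρ) : 0 < sin (π / (2 * ρ)) :=
  sin_pos_of_pos_of_lt_pi (pi_div_two_mul_pos hρ) (by linarith [pi_pos, pi_div_two_mul_le hρ])

lemma edir_re (j : ℕ) (ρ : ℝ) : (edir j ρ).re = cos (π / (2 * ρ)) := by
  rw [edir, Complex.exp_ofReal_mul_I_re]
  rcases esgn_eq_one_or_neg_one j with h | h <;> simp [h]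

lemma edir_im (j : ℕ) (ρ : ℝ) : (edir j ρ).im = esgn j * sin (π / (2 * ρ)) := by
  rw [edir, Complex.exp_ofReal_mul_I_im]
  rcases esgn_eq_one_or_neg_one j with h | h <;> simp [h]

lemma norm_edir (j : ℕ) (ρ : ℝ) : ‖edir j ρ‖ = 1 := Complex.norm_exp_ofReal_mul_I _

lemma ray_re : ((σ : ℂ) + t * edir j ρ).re = σ + t * cos (π / (2 * ρ)) := by
  simp [edir_re, edir_im]

lemma ray_im : ((σ : ℂ) + t * edir j ρ).im = esgn j * (t * sin (π / (2 * ρ))) := by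
  simp [edir_im]; ring

lemma le_norm_ray_left (hρ : 1 ≤ ρ) (ht : 0 ≤ t) :
    σ ≤ ‖(σ : ℂ) + t * edir j ρ‖ := by
  have hcos := cos_pi_div_two_mul_nonneg hρ
  calc σ ≤ ((σ : ℂ) + t * edir j ρ).re := by rw [ray_re]; nlinarith
    _ ≤ _ := Complex.re_le_norm _

lemma le_norm_ray_right (hρ : 1 ≤ ρ) (hσ : 0 ≤ σ) (ht : 0 ≤ t) :
    t ≤ ‖(σ : ℂ) + t * edir j ρ‖ := by
  have hcos := cos_pi_div_two_mul_nonneg hρ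
  have hsq : t ^ 2 ≤ ‖(σ : ℂ) + t * edir j ρ‖ ^ 2 := by
    rw [Complex.sq_norm, Complex.normSq_apply, ray_re, ray_im]
    have := sin_sq_add_cos_sq (π / (2 * ρ))
    rcases esgn_eq_one_or_neg_one j with h | h <;> rw [h] <;>
      nlinarith [mul_nonneg (mul_nonneg hσ ht) hcos]
  exact abs_le_of_sq_le_sq' hsq (norm_nonneg _) |>.2

lemma ray_ne_zero (hρ : 1 ≤ ρ) (hσ : 0 < σ) (ht : 0 ≤ t) : (σ : ℂ) + t * edir j ρ ≠ 0 :=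
  norm_pos_iff.1 (hσ.trans_le (le_norm_ray_left hρ ht))

lemma ray_mem_slitPlane_of_base_pos (hρ : 1 ≤ ρ) (hσ : 0 < σ) (ht : 0 ≤ t) :
    (σ : ℂ) + t * edir j ρ ∈ Complex.slitPlane := by
  left
  rw [ray_re]
  have := cos_pi_div_two_mul_nonneg hρ
  positivity

lemma ray_mem_slitPlane_of_param_pos (hρ : 1 ≤ ρ) (ht : 0 < t) :
    (σ : ℂ) + t * edir j ρ ∈ Complex.slitPlane := by
  right
  rw [ray_im]
  have := sin_pi_div_two_mul_pos hρ
  rcases esgn_eq_one_or_neg_one j with h | h <;> rw [h] <;> nlinarith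

lemma esgn_mul_arg_ray_mem_Icc (hρ : 1 ≤ ρ) (hσ : 0 ≤ σ) (ht : 0 ≤ t) :
    esgn j * Complex.arg ((σ : ℂ) + t * edir j ρ) ∈ Icc 0 (π / (2 * ρ)) := by
  have hsin := sin_pi_div_two_mul_pos hρ
  have harg : esgn j * Complex.arg ((σ : ℂ) + t * edir j ρ) =
      arcsin (t * sin (π / (2 * ρ)) / ‖(σ : ℂ) + t * edir j ρ‖) := by
    rw [Complex.arg_of_re_nonneg (by rw [ray_re]; have := cos_pi_div_two_mul_nonneg hρ; positivity),
      ray_im]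
    rcases esgn_eq_one_or_neg_one j with h | h <;> simp [h, neg_div, arcsin_neg]
  rw [harg]
  refine ⟨arcsin_nonneg.2 (by positivity), ?_⟩
  calc _ ≤ arcsin (sin (π / (2 * ρ))) := monotone_arcsin <|
        div_le_of_le_mul₀ (norm_nonneg _) hsin.le <| by
          nlinarith [le_norm_ray_right (j := j) hρ hσ ht]
    _ = π / (2 * ρ) := arcsin_sin (by linarith [pi_pos, pi_div_two_mul_pos hρ])
        (pi_div_two_mul_le hρ)

lemma esgn_mul_im_cpow (j : ℕ) (x : ℂ) (c : ℝ) :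
    esgn j * (x ^ (c : ℂ)).im = ‖x‖ ^ c * sin (esgn j * Complex.arg x * c) := by
  rw [Complex.cpow_ofReal_im]
  rcases esgn_eq_one_or_neg_one j with h | h <;> simp [h, neg_mul, sin_neg]

lemma esgn_mul_im_cpow_ray_nonneg (hρ : 1 ≤ ρ) (hσ : 0 ≤ σ) (ht : 0 ≤ t) {c : ℝ}
    (hc₀ : 0 ≤ c) (hc : c ≤ 2 * ρ) :
    0 ≤ esgn j * (((σ : ℂ) + t * edir j ρ) ^ (c : ℂ)).im := by
  rw [esgn_mul_im_cpow]
  obtain ⟨hβ₀, hβ⟩ := esgn_mul_arg_ray_mem_Icc (j := j) hρ hσ ht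
  refine mul_nonneg (rpow_nonneg (norm_nonneg _) _) (sin_nonneg_of_nonneg_of_le_pi
    (mul_nonneg hβ₀ hc₀) ?_)
  calc _ ≤ π / (2 * ρ) * (2 * ρ) := mul_le_mul hβ hc hc₀ (pi_div_two_mul_pos hρ).le
    _ = π := by linarith [pi_div_two_mul_mul_self hρ]

lemma hasDerivAt_esgn_mul_im_cpow_ray (hρ : 1 ≤ ρ) (ht : 0 < t) (σ : ℝ) :
    HasDerivAt (fun σ : ℝ => esgn j * (((σ : ℂ) + t * edir j ρ) ^ (ρ : ℂ)).im)
      (esgn j * ((ρ : ℂ) * ((σ : ℂ) + t * edir j ρ) ^ ((ρ : ℂ) - 1)).im) σ := by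
  have hcpow : HasDerivAt (fun ζ : ℂ => (ζ + t * edir j ρ) ^ (ρ : ℂ))
      ((ρ : ℂ) * ((σ : ℂ) + t * edir j ρ) ^ ((ρ : ℂ) - 1) * 1) σ :=
    ((hasDerivAt_id _).add_const _).cpow_const (ray_mem_slitPlane_of_param_pos hρ ht)
  rw [mul_one] at hcpow
  exact (Complex.imCLM.hasFDerivAt.comp_hasDerivAt σ hcpow.comp_ofReal).const_mul _

lemma monotoneOn_esgn_mul_im_cpow_ray (hρ : 1 ≤ ρ) (ht : 0 < t) :
    MonotoneOn (fun σ : ℝ => esgn j * (((σ : ℂ) + t * edir j ρ) ^ (ρ : ℂ)).im) (Ici 0) := by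
  refine monotoneOn_of_hasDerivWithinAt_nonneg (convex_Ici 0)
    (fun σ _ => (hasDerivAt_esgn_mul_im_cpow_ray hρ ht σ).continuousAt.continuousWithinAt)
    (fun σ _ => (hasDerivAt_esgn_mul_im_cpow_ray hρ ht σ).hasDerivWithinAt) fun σ hσ => ?_
  rw [interior_Ici] at hσ
  have hcast : (ρ : ℂ) - 1 = ((ρ - 1 : ℝ) : ℂ) := by push_cast; ring
  rw [hcast, Complex.im_ofReal_mul, mul_left_comm]
  exact mul_nonneg (by linarith)
    (esgn_mul_im_cpow_ray_nonneg hρ (le_of_lt hσ) ht.le (by linarith) (by linarith))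

lemma esgn_mul_im_cpow_edir (hρ : 1 ≤ ρ) (ht : 0 < t) :
    esgn j * ((((0 : ℝ) : ℂ) + t * edir j ρ) ^ (ρ : ℂ)).im = t ^ ρ := by
  have harg : Complex.arg (edir j ρ) = esgn j * (π / (2 * ρ)) := by
    rw [edir, Complex.arg_exp_mul_I, toIocMod_eq_self]
    have := pi_div_two_mul_pos hρ
    have := pi_div_two_mul_le hρ
    rcases esgn_eq_one_or_neg_one j with h | h <;> rw [h] <;> constructor <;> linarith
  rw [esgn_mul_im_cpow, Complex.ofReal_zero, zero_add, Complex.arg_real_mul _ ht, harg,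
    norm_mul, norm_edir, Complex.norm_real, norm_of_nonneg ht.le, mul_one]
  have hsq : esgn j * esgn j = 1 := by
    rcases esgn_eq_one_or_neg_one j with h | h <;> simp [h]
  rw [← mul_assoc, hsq, one_mul, pi_div_two_mul_mul_self hρ, sin_pi_div_two, mul_one]

lemma rpow_le_esgn_mul_im_cpow_ray (hρ : 1 ≤ ρ) (hs : 0 ≤ s) (ht : 0 ≤ t) :
    t ^ ρ ≤ esgn j * (((s : ℂ) + t * edir j ρ) ^ (ρ : ℂ)).im := by
  rcases ht.eq_or_lt with rfl | ht
  · rw [zero_rpow (by linarith)]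
    exact esgn_mul_im_cpow_ray_nonneg hρ hs le_rfl (by linarith) (by linarith)
  · rw [← esgn_mul_im_cpow_edir hρ ht]
    exact monotoneOn_esgn_mul_im_cpow_ray hρ ht self_mem_Ici hs hs

end Ray

noncomputable def expPhase (j : ℕ) (ρ s ω t : ℝ) : ℂ :=
  Complex.exp (esgn j * Complex.I * ω * ((s : ℂ) + t * edir j ρ) ^ (ρ : ℂ))

section Integral

variable {j n : ℕ} {ρ s ω t : ℝ}

lemma integrableOn_natCast_rpow_mul_exp_neg_mul_rpow (k : ℕ) (hρ : 0 < ρ) (hω : 0 < ω) :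
    IntegrableOn (fun t : ℝ => t ^ (k : ℝ) * exp (-ω * t ^ ρ)) (Ioi 0) :=
  integrableOn_rpow_mul_exp_neg_mul_rpow (by linarith [k.cast_nonneg (α := ℝ)]) hρ hω

lemma norm_expPhase_le (hρ : 1 ≤ ρ) (hs : 0 ≤ s) (hω : 0 ≤ ω) (ht : 0 ≤ t) :
    ‖expPhase j ρ s ω t‖ ≤ exp (-ω * t ^ ρ) := by
  rw [expPhase, Complex.norm_exp]
  refine exp_le_exp.2 ?_
  have hre : (esgn j * Complex.I * ω * ((s : ℂ) + t * edir j ρ) ^ (ρ : ℂ)).re =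
      -ω * (esgn j * (((s : ℂ) + t * edir j ρ) ^ (ρ : ℂ)).im) := by
    simp [Complex.mul_re, Complex.mul_im]; ring
  rw [hre]
  exact mul_le_mul_of_nonpos_left (rpow_le_esgn_mul_im_cpow_ray hρ hs ht) (by linarith)

lemma norm_pow_mul_expPhase_le (hρ : 1 ≤ ρ) (hs : 0 ≤ s) (hω : 0 ≤ ω) (ht : 0 ≤ t) :
    ‖(t : ℂ) ^ n * expPhase j ρ s ω t‖ ≤ t ^ (n : ℝ) * exp (-ω * t ^ ρ) := by
  rw [norm_mul, norm_pow, Complex.norm_real, norm_of_nonneg ht, rpow_natCast]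
  exact mul_le_mul_of_nonneg_left (norm_expPhase_le hρ hs hω ht) (by positivity)

lemma phiInt_one_eq (j n : ℕ) (s ω ρ t : ℝ) :
    phiInt j n s ω ρ 1 t = edir j ρ ^ (n + 1) * ((t : ℂ) ^ n * expPhase j ρ s ω t) := by
  rw [phiInt, expPhase, Complex.ofReal_one, sub_self, Complex.cpow_zero, add_sub_cancel_left]
  ring

lemma norm_phiE_one (j n : ℕ) (s ω ρ : ℝ) :
    ‖phiE j n s ω ρ 1‖ =
      ‖∫ t in Ioi (0 : ℝ), (t : ℂ) ^ n * expPhase j ρ s ω t‖ / n.factorial := by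
  simp_rw [phiE, phiInt_one_eq, integral_const_mul, norm_mul, norm_div, norm_pow, norm_neg,
    norm_one, one_pow, norm_edir, one_pow, one_mul, Complex.norm_natCast]
  ring

lemma norm_integral_pow_mul_expPhase_le (hρ : 1 ≤ ρ) (hs : 0 ≤ s) (hω : 0 < ω) :
    ‖∫ t in Ioi (0 : ℝ), (t : ℂ) ^ n * expPhase j ρ s ω t‖ ≤
      ω ^ (-((n : ℝ) + 1) / ρ) * (1 / ρ) * Gamma (((n : ℝ) + 1) / ρ) := by
  rw [← integral_rpow_mul_exp_neg_mul_rpow (by linarith) (by linarith [n.cast_nonneg (α := ℝ)]) hω]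
  refine norm_integral_le_of_norm_le
    (integrableOn_natCast_rpow_mul_exp_neg_mul_rpow n (zero_lt_one.trans_le hρ) hω) ?_
  filter_upwards [ae_restrict_mem measurableSet_Ioi] with t ht
  exact norm_pow_mul_expPhase_le hρ hs hω.le (le_of_lt ht)

lemma norm_phiE_one_le (hρ : 1 ≤ ρ) (hs : 0 ≤ s) (hω : 0 < ω) :
    ‖phiE j n s ω ρ 1‖ ≤
      1 / (n.factorial * ρ) * Gamma (((n : ℝ) + 1) / ρ) * ω ^ (-((n : ℝ) + 1) / ρ) := by
  rw [norm_phiE_one]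
  calc _ ≤ ω ^ (-((n : ℝ) + 1) / ρ) * (1 / ρ) * Gamma (((n : ℝ) + 1) / ρ) / n.factorial :=
        div_le_div_of_nonneg_right (norm_integral_pow_mul_expPhase_le hρ hs hω) (by positivity)
    _ = _ := by field_simp

lemma hasDerivAt_ray_cpow (hρ : 1 ≤ ρ) (hs : 0 < s) (ht : 0 ≤ t) (c : ℂ) :
    HasDerivAt (fun t : ℝ => ((s : ℂ) + t * edir j ρ) ^ c)
      (c * ((s : ℂ) + t * edir j ρ) ^ (c - 1) * edir j ρ) t := by
  have h := ((((hasDerivAt_id (t : ℂ)).mul_const (edir j ρ)).const_add (s : ℂ)).cpow_const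
    (c := c) (ray_mem_slitPlane_of_base_pos hρ hs ht)).comp_ofReal
  simpa using h

lemma hasDerivAt_expPhase (hρ : 1 ≤ ρ) (hs : 0 < s) (ht : 0 ≤ t) :
    HasDerivAt (expPhase j ρ s ω) (expPhase j ρ s ω t * (esgn j * Complex.I * ω *
      ((ρ : ℂ) * ((s : ℂ) + t * edir j ρ) ^ ((ρ : ℂ) - 1) * edir j ρ))) t :=
  ((hasDerivAt_ray_cpow hρ hs ht _).const_mul _).cexp

lemma norm_ray_cpow_le (hρ : 1 ≤ ρ) (hs : 0 < s) (ht : 0 ≤ t) {c : ℝ} (hc : c ≤ 0) :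
    ‖((s : ℂ) + t * edir j ρ) ^ (c : ℂ)‖ ≤ s ^ c := by
  rw [Complex.norm_cpow_real]
  exact rpow_le_rpow_of_nonpos hs (le_norm_ray_left hρ ht) hc

variable (j n ρ s ω) in
noncomputable def ibpFun (t : ℝ) : ℂ :=
  (t : ℂ) ^ n * ((s : ℂ) + t * edir j ρ) ^ ((1 - ρ : ℝ) : ℂ) * expPhase j ρ s ω t

variable (j n ρ s ω) in
noncomputable def ibpRem (t : ℝ) : ℂ :=
  (n * (t : ℂ) ^ (n - 1) * ((s : ℂ) + t * edir j ρ) ^ ((1 - ρ : ℝ) : ℂ) +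
    (1 - ρ : ℝ) * (t : ℂ) ^ n * ((s : ℂ) + t * edir j ρ) ^ ((-ρ : ℝ) : ℂ) * edir j ρ) *
    expPhase j ρ s ω t

lemma hasDerivAt_ibpFun (hρ : 1 ≤ ρ) (hs : 0 < s) (ht : 0 ≤ t) :
    HasDerivAt (ibpFun j n ρ s ω) (ibpRem j n ρ s ω t +
      esgn j * Complex.I * ω * ρ * edir j ρ * ((t : ℂ) ^ n * expPhase j ρ s ω t)) t := by
  have hz : (s : ℂ) + t * edir j ρ ≠ 0 := ray_ne_zero hρ hs ht
  have hcancel : ((s : ℂ) + t * edir j ρ) ^ ((1 - ρ : ℝ) : ℂ) *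
      ((s : ℂ) + t * edir j ρ) ^ ((ρ : ℂ) - 1) = 1 := by
    rw [← Complex.cpow_add _ _ hz]; push_cast; ring_nf; exact Complex.cpow_zero _
  have hF := (((hasDerivAt_pow n (t : ℂ)).comp_ofReal).mul
    (hasDerivAt_ray_cpow (j := j) hρ hs ht ((1 - ρ : ℝ) : ℂ))).mul
    (hasDerivAt_expPhase (j := j) (ω := ω) hρ hs ht)
  refine HasDerivAt.congr_deriv (f := ibpFun j n ρ s ω) hF ?_
  rw [ibpRem, Pi.mul_apply, show ((1 - ρ : ℝ) : ℂ) - 1 = ((-ρ : ℝ) : ℂ) by push_cast; ring]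
  linear_combination (esgn j * Complex.I * ω * ρ * edir j ρ * (t : ℂ) ^ n *
    expPhase j ρ s ω t) * hcancel

lemma norm_ibpRem_le (hρ : 1 ≤ ρ) (hs : 0 < s) (hω : 0 ≤ ω) (ht : 0 ≤ t) :
    ‖ibpRem j n ρ s ω t‖ ≤ n * s ^ (1 - ρ) * (t ^ ((n - 1 : ℕ) : ℝ) * exp (-ω * t ^ ρ)) +
      (ρ - 1) * s ^ (-ρ) * (t ^ (n : ℝ) * exp (-ω * t ^ ρ)) := by
  have hA : ‖n * (t : ℂ) ^ (n - 1) * ((s : ℂ) + t * edir j ρ) ^ ((1 - ρ : ℝ) : ℂ)‖ ≤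
      n * s ^ (1 - ρ) * t ^ ((n - 1 : ℕ) : ℝ) := by
    rw [norm_mul, norm_mul, norm_pow, Complex.norm_natCast, Complex.norm_real,
      norm_of_nonneg ht, rpow_natCast, mul_right_comm]
    exact mul_le_mul_of_nonneg_right (mul_le_mul_of_nonneg_left
      (norm_ray_cpow_le hρ hs ht (by linarith)) n.cast_nonneg) (by positivity)
  have hB : ‖((1 - ρ : ℝ) : ℂ) * (t : ℂ) ^ n * ((s : ℂ) + t * edir j ρ) ^ ((-ρ : ℝ) : ℂ) *
      edir j ρ‖ ≤ (ρ - 1) * s ^ (-ρ) * t ^ (n : ℝ) := by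
    rw [norm_mul, norm_mul, norm_mul, norm_edir, mul_one, norm_pow, Complex.norm_real,
      Complex.norm_real, norm_of_nonneg ht, norm_of_nonpos (by linarith), neg_sub,
      rpow_natCast, mul_right_comm]
    exact mul_le_mul_of_nonneg_right (mul_le_mul_of_nonneg_left
      (norm_ray_cpow_le hρ hs ht (by linarith)) (by linarith)) (by positivity)
  rw [ibpRem, norm_mul]
  calc _ ≤ (n * s ^ (1 - ρ) * t ^ ((n - 1 : ℕ) : ℝ) + (ρ - 1) * s ^ (-ρ) * t ^ (n : ℝ)) *
        exp (-ω * t ^ ρ) :=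
      mul_le_mul ((norm_add_le _ _).trans (add_le_add hA hB))
        (norm_expPhase_le hρ hs.le hω ht) (norm_nonneg _)
        (add_nonneg (by positivity) (mul_nonneg (mul_nonneg (by linarith) (by positivity))
          (by positivity)))
    _ = _ := by ring

lemma integrableOn_pow_mul_expPhase (hρ : 1 ≤ ρ) (hs : 0 < s) (hω : 0 < ω) :
    IntegrableOn (fun t : ℝ => (t : ℂ) ^ n * expPhase j ρ s ω t) (Ioi 0) := by
  refine Integrable.mono'
    (integrableOn_natCast_rpow_mul_exp_neg_mul_rpow n (zero_lt_one.trans_le hρ) hω)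
    (by unfold expPhase; fun_prop) ?_
  filter_upwards [ae_restrict_mem measurableSet_Ioi] with t ht
  exact norm_pow_mul_expPhase_le hρ hs.le hω.le (le_of_lt ht)

lemma integrableOn_ibpRem (hρ : 1 ≤ ρ) (hs : 0 < s) (hω : 0 < ω) :
    IntegrableOn (ibpRem j n ρ s ω) (Ioi 0) := by
  have hρ₀ : 0 < ρ := by linarith
  refine Integrable.mono'
    (((integrableOn_natCast_rpow_mul_exp_neg_mul_rpow (n - 1) hρ₀ hω).const_mul
      (n * s ^ (1 - ρ))).add
      ((integrableOn_natCast_rpow_mul_exp_neg_mul_rpow n hρ₀ hω).const_mul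
        ((ρ - 1) * s ^ (-ρ))))
    (by unfold ibpRem expPhase; fun_prop) ?_
  filter_upwards [ae_restrict_mem measurableSet_Ioi] with t ht
  exact norm_ibpRem_le hρ hs hω.le (le_of_lt ht)

lemma tendsto_ibpFun_atTop (hρ : 1 ≤ ρ) (hs : 0 < s) (hω : 0 < ω) :
    Tendsto (ibpFun j n ρ s ω) atTop (𝓝 0) := by
  have hlim := (tendsto_rpow_mul_exp_neg_mul_atTop_nhds_zero n ω hω).const_mul (s ^ (1 - ρ))
  rw [mul_zero] at hlim
  refine squeeze_zero_norm' ?_ hlim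
  filter_upwards [eventually_ge_atTop 1] with t ht
  have ht₀ : 0 ≤ t := by linarith
  have hexp : exp (-ω * t ^ ρ) ≤ exp (-ω * t) := by
    have : t ≤ t ^ ρ := by simpa using rpow_le_rpow_of_exponent_le ht hρ
    exact exp_le_exp.2 (by nlinarith)
  rw [ibpFun, norm_mul, norm_mul, norm_pow, Complex.norm_real, norm_of_nonneg ht₀]
  calc _ ≤ t ^ n * s ^ (1 - ρ) * exp (-ω * t) :=
        mul_le_mul (mul_le_mul_of_nonneg_left (norm_ray_cpow_le hρ hs ht₀ (by linarith))
          (by positivity)) ((norm_expPhase_le hρ hs.le hω.le ht₀).trans hexp) (norm_nonneg _)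
          (by positivity)
    _ = _ := by rw [rpow_natCast]; ring

lemma norm_esgn_mul_I_mul_edir (hρ : 0 < ρ) (hω : 0 < ω) :
    ‖(esgn j * Complex.I * ω * ρ * edir j ρ : ℂ)‖ = ω * ρ := by
  have : |esgn j| = 1 := by rcases esgn_eq_one_or_neg_one j with h | h <;> simp [h]
  simp [this, norm_edir, abs_of_pos hω, abs_of_pos hρ]

lemma integral_pow_mul_expPhase_eq (hρ : 1 ≤ ρ) (hs : 0 < s) (hω : 0 < ω) :
    ∫ t in Ioi (0 : ℝ), (t : ℂ) ^ n * expPhase j ρ s ω t =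
      -(ibpFun j n ρ s ω 0 + ∫ t in Ioi (0 : ℝ), ibpRem j n ρ s ω t) /
        (esgn j * Complex.I * ω * ρ * edir j ρ) := by
  have hc : (esgn j * Complex.I * ω * ρ * edir j ρ : ℂ) ≠ 0 := by
    rw [← norm_ne_zero_iff, norm_esgn_mul_I_mul_edir (by linarith) hω]
    exact (mul_pos hω (by linarith)).ne'
  have hH := (integrableOn_pow_mul_expPhase (j := j) (n := n) hρ hs hω).const_mul
    (esgn j * Complex.I * ω * ρ * edir j ρ : ℂ)
  have hR := integrableOn_ibpRem (j := j) (n := n) hρ hs hω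
  have hFTC := integral_Ioi_of_hasDerivAt_of_tendsto'
    (fun t ht => hasDerivAt_ibpFun hρ hs (mem_Ici.1 ht)) (hR.add hH)
    (tendsto_ibpFun_atTop hρ hs hω)
  rw [integral_add hR hH, integral_const_mul] at hFTC
  rw [eq_div_iff hc]
  linear_combination hFTC

lemma norm_integral_pow_mul_expPhase_le_ibp (hρ : 1 ≤ ρ) (hs : 0 < s) (hω : 0 < ω) :
    ‖∫ t in Ioi (0 : ℝ), (t : ℂ) ^ n * expPhase j ρ s ω t‖ ≤
      (‖ibpFun j n ρ s ω 0‖ + ‖∫ t in Ioi (0 : ℝ), ibpRem j n ρ s ω t‖) / (ω * ρ) := by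
  rw [integral_pow_mul_expPhase_eq hρ hs hω, norm_div, norm_neg,
    norm_esgn_mul_I_mul_edir (by linarith) hω]
  gcongr
  exact norm_add_le _ _

lemma norm_integral_ibpRem_le (hρ : 1 ≤ ρ) (hs : 0 < s) (hω : 0 < ω) :
    ‖∫ t in Ioi (0 : ℝ), ibpRem j n ρ s ω t‖ ≤
      n * s ^ (1 - ρ) * (ω ^ (-((n - 1 : ℕ) + 1 : ℝ) / ρ) * (1 / ρ) *
        Gamma (((n - 1 : ℕ) + 1 : ℝ) / ρ)) +
      (ρ - 1) * s ^ (-ρ) * (ω ^ (-((n : ℝ) + 1) / ρ) * (1 / ρ) * Gamma (((n : ℝ) + 1) / ρ)) := by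
  have hn : ∀ k : ℕ, (-1 : ℝ) < k := fun k => by linarith [k.cast_nonneg (α := ℝ)]
  have hρ₀ : 0 < ρ := by linarith
  have hI₁ := (integrableOn_natCast_rpow_mul_exp_neg_mul_rpow (n - 1) hρ₀ hω).const_mul
    (n * s ^ (1 - ρ))
  have hI₂ := (integrableOn_natCast_rpow_mul_exp_neg_mul_rpow n hρ₀ hω).const_mul
    ((ρ - 1) * s ^ (-ρ))
  rw [← integral_rpow_mul_exp_neg_mul_rpow hρ₀ (hn _) hω,
    ← integral_rpow_mul_exp_neg_mul_rpow hρ₀ (hn _) hω, ← integral_const_mul,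
    ← integral_const_mul, ← integral_add hI₁ hI₂]
  refine norm_integral_le_of_norm_le (hI₁.add hI₂) ?_
  filter_upwards [ae_restrict_mem measurableSet_Ioi] with t ht
  exact norm_ibpRem_le hρ hs hω.le (le_of_lt ht)

lemma norm_phiE_zero_le (hρ : 1 ≤ ρ) (hs : 0 < s) (hω : 0 < ω) :
    ‖phiE j 0 s ω ρ 1‖ ≤ ρ⁻¹ * ω ^ (-1 : ℝ) * s ^ (1 - ρ) +
      (ρ - 1) / ρ ^ 2 * Gamma (1 / ρ) * ω ^ (-(1 + 1 / ρ)) * s ^ (-ρ) := by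
  have hF : ‖ibpFun j 0 ρ s ω 0‖ ≤ s ^ (1 - ρ) := by
    have hG := norm_expPhase_le (j := j) hρ hs.le hω.le le_rfl
    rw [zero_rpow (by linarith), mul_zero, exp_zero] at hG
    rw [ibpFun, pow_zero, one_mul, norm_mul]
    simpa using mul_le_mul (norm_ray_cpow_le (j := j) (c := 1 - ρ) hρ hs le_rfl (by linarith)) hG
      (norm_nonneg _) (by positivity)
  have hR := norm_integral_ibpRem_le (j := j) (n := 0) hρ hs hω
  rw [norm_phiE_one, Nat.factorial_zero, Nat.cast_one, div_one]
  refine (norm_integral_pow_mul_expPhase_le_ibp hρ hs hω).trans ?_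
  calc
    _ ≤ (s ^ (1 - ρ) + (ρ - 1) * s ^ (-ρ) * (ω ^ (-1 / ρ) * (1 / ρ) * Gamma (1 / ρ))) /
        (ω * ρ) := by
      gcongr
      simpa using hR
    _ = _ := by
      rw [neg_add, rpow_add hω, rpow_neg_one, neg_div]
      field_simp

lemma norm_phiE_succ_le (m : ℕ) (hρ : 1 ≤ ρ) (hs : 0 < s) (hω : 0 < ω) :
    ‖phiE j (m + 1) s ω ρ 1‖ ≤
      1 / (ρ ^ 2 * m.factorial) * Gamma (((m : ℝ) + 1) / ρ) * ω ^ (-(1 + ((m : ℝ) + 1) / ρ)) *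
          s ^ (1 - ρ) +
        (ρ - 1) / (ρ ^ 2 * (m + 1).factorial) * Gamma (((m : ℝ) + 1 + 1) / ρ) *
          ω ^ (-(1 + ((m : ℝ) + 1 + 1) / ρ)) * s ^ (-ρ) := by
  have hF : ibpFun j (m + 1) ρ s ω 0 = 0 := by simp [ibpFun]
  have hR := norm_integral_ibpRem_le (j := j) (n := m + 1) hρ hs hω
  simp only [Nat.add_sub_cancel, Nat.cast_add, Nat.cast_one] at hR
  have hω₁ : ∀ x : ℝ, ω ^ (-(1 + x)) = ω⁻¹ * ω ^ (-x) := fun x => by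
    rw [neg_add, rpow_add hω, rpow_neg_one]
  rw [norm_phiE_one, div_le_iff₀ (by positivity)]
  refine (norm_integral_pow_mul_expPhase_le_ibp hρ hs hω).trans ?_
  rw [hF, norm_zero, zero_add]
  refine (div_le_div_of_nonneg_right hR (by positivity)).trans_eq ?_
  rw [hω₁, hω₁, neg_div, neg_div, Nat.factorial_succ]
  push_cast
  field_simp

end Integral

theorem statement3_general (j : ℕ) (ρ : ℝ) (hρ : 1 ≤ ρ)
    (N : ℕ) (hN : 1 ≤ N) :
    (∀ s > (0 : ℝ), ∀ ω > (0 : ℝ),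
      ‖phiE j (N - 1) s ω ρ 1‖ ≤
        (1 / (((N - 1).factorial : ℝ) * ρ)) * Real.Gamma ((N : ℝ) / ρ) * ω ^ (-(N : ℝ) / ρ)) ∧
    (∀ s > (0 : ℝ), ∀ ω > (0 : ℝ),
      ‖phiE j (N - 1) s ω ρ 1‖ ≤
        (if N = 1 then ρ⁻¹ else (1 / (ρ ^ 2 * ((N - 2).factorial : ℝ))) * Real.Gamma (((N : ℝ) - 1) / ρ)) *
            ω ^ (-(1 + ((N : ℝ) - 1) / ρ)) * s ^ (1 - ρ) +
          (if N = 1 then ((ρ - 1) / ρ ^ 2) * Real.Gamma (1 / ρ)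
            else ((ρ - 1) / (ρ ^ 2 * ((N - 1).factorial : ℝ))) * Real.Gamma ((N : ℝ) / ρ)) *
            ω ^ (-(1 + (N : ℝ) / ρ)) * s ^ (-ρ)) := by
  obtain ⟨n, rfl⟩ := Nat.exists_eq_add_of_le' hN
  refine ⟨fun s hs ω hω => ?_, fun s hs ω hω => ?_⟩
  · simpa using norm_phiE_one_le hρ hs.le hω
  rcases n with _ | m
  · simpa using norm_phiE_zero_le hρ hs hω
  · simpa using norm_phiE_succ_le m hρ hs hω

theorem statement3 (j : ℕ) (hj : j = 1 ∨ j = 2) (ρ : ℝ) (hρ : 1 ≤ ρ)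
    (N : ℕ) (hN : 1 ≤ N) :
    (∀ s > (0 : ℝ), ∀ ω > (0 : ℝ),
      ‖phiE j (N - 1) s ω ρ 1‖ ≤
        (1 / (((N - 1).factorial : ℝ) * ρ)) * Real.Gamma ((N : ℝ) / ρ) * ω ^ (-(N : ℝ) / ρ)) ∧
    (∀ s > (0 : ℝ), ∀ ω > (0 : ℝ),
      ‖phiE j (N - 1) s ω ρ 1‖ ≤
        (if N = 1 then ρ⁻¹ else (1 / (ρ ^ 2 * ((N - 2).factorial : ℝ))) * Real.Gamma (((N : ℝ) - 1) / ρ)) *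
            ω ^ (-(1 + ((N : ℝ) - 1) / ρ)) * s ^ (1 - ρ) +
          (if N = 1 then ((ρ - 1) / ρ ^ 2) * Real.Gamma (1 / ρ)
            else ((ρ - 1) / (ρ ^ 2 * ((N - 1).factorial : ℝ))) * Real.Gamma ((N : ℝ) / ρ)) *
            ω ^ (-(1 + (N : ℝ) / ρ)) * s ^ (-ρ)) :=
  statement3_general j ρ hρ N hN
end

section
/- Let N ≥ 1 be an integer, ρ ≥ 2, and let f : (0,∞) × (0,∞) → ℝ satisfy, for three constants a, b, c > 0 and all s, ω > 0: |f(s,ω)| ≤ a ω^{−N/ρ} and |f(s,ω)| ≤ b ω^{−(1+(N−1)/ρ)} s^{1−ρ} + c ω^{−(1+N/ρ)} s^{−ρ}. Fix γ ∈ (0,1) and set δ := (γ+N)/ρ, which lies in (N/ρ, (1+N)/ρ). Then for all s, ω > 0, |f(s,ω)| ≤ L_{γ,ρ} s^{−γ} ω^{−δ}, where L_{γ,ρ} := a (K_ρ)^γ and K_ρ is the unique positive solution of a K^ρ − b K − c = 0. -/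
/-!
STATEMENT 4: Let N ≥ 1 be an integer, ρ ≥ 2, and f : (0,∞) × (0,∞) → ℝ satisfy, with constants
a, b, c > 0, |f(s,ω)| ≤ a ω^{−N/ρ} and |f(s,ω)| ≤ b ω^{−(1+(N−1)/ρ)} s^{1−ρ} + c ω^{−(1+N/ρ)} s^{−ρ}
for all s, ω > 0. Fix γ ∈ (0,1) and set δ := (γ+N)/ρ ∈ (N/ρ, (1+N)/ρ). Then for all s, ω > 0,
|f(s,ω)| ≤ L_{γ,ρ} s^{−γ} ω^{−δ}, where L_{γ,ρ} := a (K_ρ)^γ and K_ρ is the unique positive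
solution of aK^ρ − bK − c = 0.
-/

theorem statement4 (N : ℕ) (hN : 1 ≤ N) (ρ : ℝ) (hρ : 2 ≤ ρ)
    (a b c : ℝ) (ha : 0 < a) (hb : 0 < b) (hc : 0 < c)
    (f : ℝ → ℝ → ℝ)
    (hf1 : ∀ s > (0 : ℝ), ∀ ω > (0 : ℝ), |f s ω| ≤ a * ω ^ (-(N : ℝ) / ρ))
    (hf2 : ∀ s > (0 : ℝ), ∀ ω > (0 : ℝ),
      |f s ω| ≤ b * ω ^ (-(1 + ((N : ℝ) - 1) / ρ)) * s ^ (1 - ρ) +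
        c * ω ^ (-(1 + (N : ℝ) / ρ)) * s ^ (-ρ))
    (γ : ℝ) (hγ : γ ∈ Set.Ioo (0 : ℝ) 1)
    (K : ℝ) (hK : 0 < K) (hKeq : a * K ^ ρ - b * K - c = 0)
    (hKuniq : ∀ K' : ℝ, 0 < K' → a * K' ^ ρ - b * K' - c = 0 → K' = K) :
    (γ + N) / ρ ∈ Set.Ioo ((N : ℝ) / ρ) ((1 + N) / ρ) ∧
    ∀ s > (0 : ℝ), ∀ ω > (0 : ℝ),
      |f s ω| ≤ a * K ^ γ * s ^ (-γ) * ω ^ (-((γ + (N : ℝ)) / ρ)) := by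
  obtain ⟨hγ0, hγ1⟩ := hγ
  have hρ0 : (0:ℝ) < ρ := by linarith
  refine ⟨⟨by apply div_lt_div_of_pos_right <;> linarith,
           by apply div_lt_div_of_pos_right <;> linarith⟩, ?_⟩
  intro s hs ω hω
  set t : ℝ := ω ^ (1/ρ) with ht
  have htpos : 0 < t := Real.rpow_pos_of_pos hω _
  set u : ℝ := s * t with hu
  have hupos : 0 < u := mul_pos hs htpos
  have hωN : (0:ℝ) < ω ^ (-(N:ℝ)/ρ) := Real.rpow_pos_of_pos hω _
  -- u^x = s^x * ω^(x/ρ)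
  have hU : ∀ x : ℝ, u ^ x = s ^ x * ω ^ (x / ρ) := by
    intro x
    rw [hu, Real.mul_rpow hs.le htpos.le, ht, ← Real.rpow_mul hω.le]
    rw [one_div_mul_eq_div]
  -- Identity A: goal RHS
  have hA : s ^ (-γ) * ω ^ (-((γ + (N:ℝ)) / ρ)) = u ^ (-γ) * ω ^ (-(N:ℝ)/ρ) := by
    rw [hU, mul_assoc, ← Real.rpow_add hω]
    congr 1
    congr 1
    field_simp
    ring
  -- Identity B
  have hB : ω ^ (-(1 + ((N:ℝ) - 1) / ρ)) * s ^ (1 - ρ) = u ^ (1 - ρ) * ω ^ (-(N:ℝ)/ρ) := by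
    rw [hU, mul_assoc, ← Real.rpow_add hω, mul_comm]
    congr 1
    congr 1
    field_simp
    ring
  -- Identity C
  have hC : ω ^ (-(1 + (N:ℝ) / ρ)) * s ^ (-ρ) = u ^ (-ρ) * ω ^ (-(N:ℝ)/ρ) := by
    rw [hU, mul_assoc, ← Real.rpow_add hω, mul_comm]
    congr 1
    congr 1
    field_simp
    ring
  rw [mul_assoc, hA, ← mul_assoc]
  rcases le_total u K with hcase | hcase
  · -- small u : use hf1
    refine (hf1 s hs ω hω).trans ?_
    have h1 : u ^ γ ≤ K ^ γ := Real.rpow_le_rpow hupos.le hcase hγ0.le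
    have h2 : (1:ℝ) ≤ K ^ γ * u ^ (-γ) := by
      rw [Real.rpow_neg hupos.le, ← div_eq_mul_inv, le_div_iff₀ (Real.rpow_pos_of_pos hupos γ),
        one_mul]
      exact h1
    calc a * ω ^ (-(N:ℝ)/ρ) = a * 1 * ω ^ (-(N:ℝ)/ρ) := by ring
      _ ≤ a * (K ^ γ * u ^ (-γ)) * ω ^ (-(N:ℝ)/ρ) := by
          apply mul_le_mul_of_nonneg_right _ hωN.le
          exact mul_le_mul_of_nonneg_left h2 ha.le
      _ = a * K ^ γ * u ^ (-γ) * ω ^ (-(N:ℝ)/ρ) := by ring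
  · -- large u : use hf2
    refine (hf2 s hs ω hω).trans ?_
    rw [mul_assoc b, hB, mul_assoc c, hC]
    have key : b * u ^ (1-ρ) + c * u ^ (-ρ) ≤ a * K ^ γ * u ^ (-γ) := by
      -- first: b*u + c ≤ a*K^γ*u^(ρ-γ)
      have e1 : u ^ (ρ - γ) = u ^ (ρ - γ - 1) * u := by
        rw [show ρ - γ = (ρ - γ - 1) + 1 by ring, Real.rpow_add_one hupos.ne']
        simp
      have e2 : K ^ (ρ - γ - 1) ≤ u ^ (ρ - γ - 1) :=
        Real.rpow_le_rpow hK.le hcase (by linarith)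
      have e3 : K ^ γ * K ^ (ρ - γ - 1) = K ^ (ρ - 1) := by
        rw [← Real.rpow_add hK]; ring_nf
      have e4 : K ^ (ρ - 1) * K = K ^ ρ := by
        rw [← Real.rpow_add_one hK.ne']; ring_nf
      have hstep : b * u + c ≤ a * K ^ γ * u ^ (ρ - γ) := by
        have l1 : a * K ^ (ρ - 1) * u ≤ a * K ^ γ * u ^ (ρ - γ) := by
          rw [e1, ← e3]
          have h := mul_le_mul_of_nonneg_right e2 hupos.le
          nlinarith [mul_le_mul_of_nonneg_left h
            (mul_pos ha (Real.rpow_pos_of_pos hK γ)).le]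
        have l2 : b * u + c ≤ a * K ^ (ρ - 1) * u := by
          have hKρ : a * K ^ ρ = b * K + c := by linarith
          have hak : a * K ^ (ρ - 1) * K = b * K + c := by
            rw [mul_assoc, e4]; exact hKρ
          have hcK : c * u ≥ c * K := mul_le_mul_of_nonneg_left hcase hc.le
          have hKne := hK.ne'
          -- a*K^(ρ-1) = b + c/K, so a*K^(ρ-1)*u = b*u + (c/K)*u ≥ b*u + c
          nlinarith [mul_pos hc hupos]
        linarith
      -- divide by u^ρ
      have e5 : u ^ (1 - ρ) = u * u ^ (-ρ) := by
        rw [show (1:ℝ) - ρ = -ρ + 1 by ring, Real.rpow_add_one hupos.ne']; ring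
      have e6 : u ^ (-γ) = u ^ (ρ - γ) * u ^ (-ρ) := by
        rw [← Real.rpow_add hupos]; ring_nf
      have hup : (0:ℝ) < u ^ (-ρ) := Real.rpow_pos_of_pos hupos _
      calc b * u ^ (1-ρ) + c * u ^ (-ρ) = (b * u + c) * u ^ (-ρ) := by rw [e5]; ring
        _ ≤ (a * K ^ γ * u ^ (ρ - γ)) * u ^ (-ρ) :=
            mul_le_mul_of_nonneg_right hstep hup.le
        _ = a * K ^ γ * u ^ (-γ) := by rw [e6]; ring
    calc b * (u ^ (1-ρ) * ω ^ (-(N:ℝ)/ρ)) + c * (u ^ (-ρ) * ω ^ (-(N:ℝ)/ρ))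
        = (b * u ^ (1-ρ) + c * u ^ (-ρ)) * ω ^ (-(N:ℝ)/ρ) := by ring
      _ ≤ (a * K ^ γ * u ^ (-γ)) * ω ^ (-(N:ℝ)/ρ) :=
          mul_le_mul_of_nonneg_right key hωN.le
      _ = a * K ^ γ * u ^ (-γ) * ω ^ (-(N:ℝ)/ρ) := by ring
end

section
/- Fix ω > 0, ρ ≥ 1 and j ∈ {1,2}. Then for all s ≥ 0 and t ≥ 0, setting z := s + t e^{(−1)^{j+1} iπ/(2ρ)}, one has | e^{(−1)^{j+1} iω z^{ρ}} | ≤ e^{−ω t^{ρ}}, where z^{ρ} denotes the principal-branch complex power. -/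
/-
With θ = π/(2ρ) and w = t e^{iθ} one has w^ρ = i t^ρ, and the case j = 2 is the complex
conjugate of the case j = 1. So it suffices that s ↦ Im((s + w)^ρ) is nondecreasing on [0, ∞):
its derivative is ρ |s + w|^{ρ-1} sin((ρ - 1) arg(s + w)), and 0 ≤ arg(s + w) ≤ θ keeps
(ρ - 1) arg(s + w) in [0, π/2].
-/

open Real

lemma pi_div_two_mul_mem_Ioc {ρ : ℝ} (hρ : 1 ≤ ρ) : π / (2 * ρ) ∈ Set.Ioc 0 (π / 2) :=
  ⟨by positivity, div_le_div_of_nonneg_left pi_pos.le two_pos (by linarith)⟩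

namespace Complex

lemma im_cpow_ofReal_nonneg {z : ℂ} {r : ℝ} (hr : 0 ≤ r) (harg : 0 ≤ arg z)
    (hπ : arg z * r ≤ π) : 0 ≤ (z ^ (r : ℂ)).im := by
  rw [cpow_ofReal_im]
  exact mul_nonneg (by positivity) (sin_nonneg_of_nonneg_of_le_pi (by positivity) hπ)

lemma arg_ofReal_add_le {w : ℂ} (hre : 0 ≤ w.re) (him : 0 ≤ w.im) {s : ℝ} (hs : 0 ≤ s) :
    arg (s + w) ≤ arg w := by
  rcases eq_or_ne w 0 with rfl | hw
  · simp [arg_ofReal_of_nonneg hs]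
  have hnorm : ‖w‖ ≤ ‖s + w‖ := by
    rw [← sq_le_sq₀ (norm_nonneg _) (norm_nonneg _), Complex.sq_norm, Complex.sq_norm,
      normSq_apply, normSq_apply]
    simp only [add_re, ofReal_re, add_im, ofReal_im, zero_add]
    nlinarith
  have hsin : Real.sin (arg (s + w)) ≤ Real.sin (arg w) := by
    rw [sin_arg, sin_arg, add_im, ofReal_im, zero_add]
    exact div_le_div_of_nonneg_left him (norm_pos_iff.2 hw) hnorm
  have hmem : ∀ z : ℂ, 0 ≤ z.re → 0 ≤ z.im → arg z ∈ Set.Icc (-(π / 2)) (π / 2) :=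
    fun z h₁ h₂ =>
      ⟨by linarith [arg_nonneg_iff.2 h₂, pi_pos], arg_le_pi_div_two_iff.2 (.inl h₁)⟩
  refine (strictMonoOn_sin.le_iff_le (hmem _ ?_ ?_) (hmem w hre him)).1 hsin <;>
    simp only [add_re, add_im, ofReal_re, ofReal_im] <;> linarith

lemma hasDerivAt_im_ofReal_add_cpow {w : ℂ} {x : ℝ} (hx : (x : ℂ) + w ∈ slitPlane)
    (c : ℂ) :
    HasDerivAt (fun y : ℝ => ((y + w) ^ c).im) ((c * (x + w) ^ (c - 1)).im) x := by
  have h := (((hasDerivAt_id (x : ℂ)).add_const w).cpow_const (c := c) hx).comp_ofReal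
  rw [mul_one] at h
  exact imCLM.hasFDerivAt.comp_hasDerivAt x h

lemma monotoneOn_im_ofReal_add_cpow {w : ℂ} (hre : 0 ≤ w.re) (him : 0 < w.im) {r : ℝ}
    (hr : 1 ≤ r) (hπ : arg w * (r - 1) ≤ π) :
    MonotoneOn (fun x : ℝ => ((x + w) ^ (r : ℂ)).im) (Set.Ici 0) := by
  have hslit : ∀ x : ℝ, (x : ℂ) + w ∈ slitPlane := fun x => .inr (by simpa using him.ne')
  refine monotoneOn_of_hasDerivWithinAt_nonneg (convex_Ici 0)
    (fun x _ => (hasDerivAt_im_ofReal_add_cpow (hslit x) _).continuousAt.continuousWithinAt)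
    (fun x _ => (hasDerivAt_im_ofReal_add_cpow (hslit x) _).hasDerivWithinAt) ?_
  intro x hx
  rw [interior_Ici, Set.mem_Ioi] at hx
  have harg_le := arg_ofReal_add_le hre him.le hx.le
  have harg_nonneg : 0 ≤ arg ((x : ℂ) + w) := arg_nonneg_iff.2 (by simpa using him.le)
  rw [show (r : ℂ) - 1 = ((r - 1 : ℝ) : ℂ) by push_cast; ring, im_ofReal_mul]
  refine mul_nonneg (by linarith) (im_cpow_ofReal_nonneg (by linarith) harg_nonneg ?_)
  exact (mul_le_mul_of_nonneg_right harg_le (by linarith)).trans hπ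

lemma rpow_le_im_cpow_ofReal_add_mul_exp {ρ : ℝ} (hρ : 1 ≤ ρ) {s t : ℝ} (hs : 0 ≤ s)
    (ht : 0 ≤ t) : t ^ ρ ≤ ((s + t * exp ((π / (2 * ρ) : ℝ) * I)) ^ (ρ : ℂ)).im := by
  set θ := π / (2 * ρ) with hθ
  have hθρ : θ * ρ = π / 2 := by rw [hθ]; field_simp
  obtain ⟨hθ_pos, hθ_le⟩ := pi_div_two_mul_mem_Ioc hρ
  rcases ht.eq_or_lt with rfl | ht
  · simp [zero_rpow (by linarith : ρ ≠ 0), ← ofReal_cpow hs]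
  set w : ℂ := t * exp (θ * I)
  have hw_re : 0 ≤ w.re := by
    have := cos_nonneg_of_mem_Icc ⟨by linarith, hθ_le⟩
    simp only [w, re_ofReal_mul, exp_ofReal_mul_I_re]
    positivity
  have hw_im : 0 < w.im := by
    have := sin_pos_of_pos_of_lt_pi hθ_pos (by linarith)
    simp only [w, im_ofReal_mul, exp_ofReal_mul_I_im]
    positivity
  have hw_norm : ‖w‖ = t := by simp [w, norm_exp_ofReal_mul_I, ht.le]
  have hw_arg : arg w = θ := by
    rw [arg_real_mul _ ht, exp_mul_I, arg_cos_add_sin_mul_I ⟨by linarith, by linarith⟩]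
  have hw_arg' : arg w * (ρ - 1) ≤ π := by rw [hw_arg]; nlinarith
  have hstart : (((0 : ℝ) + w) ^ (ρ : ℂ)).im = t ^ ρ := by
    rw [ofReal_zero, zero_add, cpow_ofReal_im, hw_norm, hw_arg, hθρ, Real.sin_pi_div_two, mul_one]
  calc t ^ ρ = (((0 : ℝ) + w) ^ (ρ : ℂ)).im := hstart.symm
    _ ≤ ((s + w) ^ (ρ : ℂ)).im :=
      monotoneOn_im_ofReal_add_cpow hw_re hw_im hρ hw_arg' Set.self_mem_Ici hs hs

end Complex

open Complex ComplexConjugate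

lemma rpow_le_esgn_mul_im_cpow (j : ℕ) {ρ : ℝ} (hρ : 1 ≤ ρ) {s t : ℝ} (hs : 0 ≤ s)
    (ht : 0 ≤ t) : t ^ ρ ≤ esgn j * (((s : ℂ) + t * edir j ρ) ^ (ρ : ℂ)).im := by
  have key := rpow_le_im_cpow_ofReal_add_mul_exp hρ hs ht
  by_cases hj : j = 1
  · simpa [esgn, edir, hj] using key
  set z : ℂ := s + t * exp ((π / (2 * ρ) : ℝ) * I)
  obtain ⟨hθ_pos, hθ_le⟩ := pi_div_two_mul_mem_Ioc hρ
  have hcos : 0 ≤ Real.cos (π / (2 * ρ)) := cos_nonneg_of_mem_Icc ⟨by linarith, hθ_le⟩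
  have hz_arg : arg z ≠ π := fun h => by
    have hre := (arg_eq_pi_iff.1 h).1
    simp only [z, add_re, ofReal_re, re_ofReal_mul, exp_ofReal_mul_I_re] at hre
    nlinarith
  have hconj : (s : ℂ) + t * edir j ρ = conj z := by
    simp only [edir, esgn, if_neg hj, z, map_add, map_mul, conj_ofReal, ← exp_conj, conj_I]
    push_cast
    ring_nf
  rw [hconj, conj_cpow _ _ hz_arg, conj_ofReal, conj_im]
  simpa [esgn, hj] using key

theorem statement10_general (ω : ℝ) (hω : 0 < ω) (ρ : ℝ) (hρ : 1 ≤ ρ)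
    (j : ℕ) :
    ∀ s ≥ (0 : ℝ), ∀ t ≥ (0 : ℝ),
      ‖Complex.exp ((esgn j : ℂ) * Complex.I * (ω : ℂ) *
          (((s : ℂ) + (t : ℂ) * edir j ρ) ^ (ρ : ℂ)))‖ ≤
        Real.exp (-ω * t ^ ρ) := by
  intro s hs t ht
  have key := rpow_le_esgn_mul_im_cpow j hρ hs ht
  rw [norm_exp, Real.exp_le_exp]
  simp only [mul_re, mul_im, I_re, I_im, ofReal_re, ofReal_im]
  nlinarith

theorem statement10 (ω : ℝ) (hω : 0 < ω) (ρ : ℝ) (hρ : 1 ≤ ρ)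
    (j : ℕ) (hj : j = 1 ∨ j = 2) :
    ∀ s ≥ (0 : ℝ), ∀ t ≥ (0 : ℝ),
      ‖Complex.exp ((esgn j : ℂ) * Complex.I * (ω : ℂ) *
          (((s : ℂ) + (t : ℂ) * edir j ρ) ^ (ρ : ℂ)))‖ ≤
        Real.exp (-ω * t ^ ρ) :=
  statement10_general ω hω ρ hρ j
end

section
/- Let N ≥ 1 be an integer, ρ₁, ρ₂ ≥ 1, and let ψ : [p₁,p₂] → ℝ satisfy Assumption (P_{ρ₁,ρ₂,N}). For fixed η ∈ (0,(p₂−p₁)/2), define φ₁(p) := (ψ(p)−ψ(p₁))^{1/ρ₁} on I₁ := [p₁, p₂−η] and φ₂(p) := (ψ(p₂)−ψ(p))^{1/ρ₂} on I₂ := [p₁+η, p₂], and set s₁ := φ₁(p₂−η), s₂ := φ₂(p₁+η). Then for j = 1, 2, the map φ_j is a C^{N+1}-diffeomorphism from I_j onto [0,s_j]; in particular φ_j is C^{N+1} on I_j, bijective onto [0,s_j], and its derivative never vanishes on I_j. -/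
/-!
Write `ψ'(q) = (q - p₁)^(ρ₁-1) w(q)` with `w := (p₂ - ·)^(ρ₂-1) ψ̃`, which is `C^N` and positive on
`I₁`. The substitution `q = p₁ + t (p - p₁)` gives `ψ p - ψ p₁ = (p - p₁)^ρ₁ g(p)` with
`g(p) = ∫₀¹ t^(ρ₁-1) w(p₁ + t (p - p₁)) dt`; differentiating under the integral sign shows that `g`
is `C^N`, and it is positive, with `g(p₁) = w(p₁) / ρ₁`. Hence `φ₁ = (p - p₁) g^(1/ρ₁)`, and
differentiating the factorization gives `(p - p₁) g' = w - ρ₁ g`, so that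
`φ₁' = ρ₁⁻¹ w g^(1/ρ₁ - 1)` is `C^N` and positive: `φ₁` is `C^(N+1)` and strictly increasing.
The map `φ₂` is the same construction for `q ↦ -ψ(-q)`, composed with `p ↦ -p`.
-/

open Set intervalIntegral

def IsDiffeoOnto (n : WithTop ℕ∞) (f : ℝ → ℝ) (I J : Set ℝ) : Prop :=
  ContDiffOn ℝ n f I ∧ BijOn f I J ∧ ∀ p ∈ I, derivWithin f I p ≠ 0

theorem IsDiffeoOnto.comp_neg {n : WithTop ℕ∞} {f : ℝ → ℝ} {a b : ℝ} {J : Set ℝ}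
    (h : IsDiffeoOnto n f (Icc a b) J) : IsDiffeoOnto n (fun x => f (-x)) (Icc (-b) (-a)) J := by
  obtain ⟨hcd, hbij, hder⟩ := h
  have hneg : BijOn Neg.neg (Icc (-b) (-a)) (Icc a b) := by
    simpa using neg_injective.injOn.bijOn_image (s := Icc (-b) (-a))
  refine ⟨hcd.comp contDiff_neg.contDiffOn hneg.mapsTo, hbij.comp hneg, fun x hx => ?_⟩
  rw [derivWithin_comp_neg, neg_Icc, neg_neg, neg_neg, neg_ne_zero]
  exact hder _ (hneg.mapsTo hx)

theorem isDiffeoOnto_of_hasDerivWithinAt_pos {a b : ℝ} (hab : a < b) {n : ℕ} {f f' : ℝ → ℝ}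
    (hf : ∀ p ∈ Icc a b, HasDerivWithinAt f (f' p) (Icc a b) p)
    (hf' : ContDiffOn ℝ n f' (Icc a b)) (hpos : ∀ p ∈ Icc a b, 0 < f' p) :
    IsDiffeoOnto (n + 1) f (Icc a b) (Icc (f a) (f b)) := by
  have hud := uniqueDiffOn_Icc hab
  have hcont : ContinuousOn f (Icc a b) := fun p hp => (hf p hp).continuousWithinAt
  have hmono : StrictMonoOn f (Icc a b) :=
    strictMonoOn_of_hasDerivWithinAt_pos (convex_Icc a b) hcont
      (fun p hp => (hf p (interior_subset hp)).mono interior_subset)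
      (fun p hp => hpos p (interior_subset hp))
  refine ⟨?_, ⟨fun p hp => ⟨hmono.monotoneOn (left_mem_Icc.2 hab.le) hp hp.1,
    hmono.monotoneOn hp (right_mem_Icc.2 hab.le) hp.2⟩, hmono.injOn,
    intermediate_value_Icc hab.le hcont⟩, fun p hp => ?_⟩
  · rw [contDiffOn_succ_iff_derivWithin hud]
    exact ⟨fun p hp => (hf p hp).differentiableWithinAt, by simp,
      hf'.congr fun p hp => (hf p hp).derivWithin (hud p hp)⟩
  · rw [(hf p hp).derivWithin (hud p hp)]
    exact (hpos p hp).ne'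

theorem ContinuousOn.comp_projIcc {α β : Type*} [LinearOrder α] [TopologicalSpace α]
    [OrderTopology α] [TopologicalSpace β] {a b : α} {f : α → β} (hf : ContinuousOn f (Icc a b))
    (hab : a ≤ b) : Continuous fun q => f (projIcc a b hab q) :=
  hf.comp_continuous (continuous_subtype_val.comp continuous_projIcc) fun q => (projIcc a b hab q).2

section RadialMean

variable {a b μ : ℝ} {v : ℝ → ℝ}

noncomputable def radialMean (μ a : ℝ) (v : ℝ → ℝ) (p : ℝ) : ℝ :=
  ∫ t in (0 : ℝ)..1, t ^ μ * v (a + t * (p - a))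

theorem add_mul_sub_mem_Icc {p t : ℝ} (hp : p ∈ Icc a b) (ht : t ∈ Icc (0 : ℝ) 1) :
    a + t * (p - a) ∈ Icc a b :=
  (convex_Icc a b).add_smul_sub_mem (left_mem_Icc.2 (hp.1.trans hp.2)) hp ht

theorem radialMean_congr {w : ℝ → ℝ} (h : EqOn v w (Icc a b)) :
    EqOn (radialMean μ a v) (radialMean μ a w) (Icc a b) := fun p hp =>
  integral_congr fun t ht => by
    rw [uIcc_of_le zero_le_one] at ht
    rw [h (add_mul_sub_mem_Icc hp ht)]

theorem radialMean_self (hμ : -1 < μ) : radialMean μ a v a = v a / (μ + 1) := by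
  have hμ' : μ + 1 ≠ 0 := by linarith
  simp only [radialMean, sub_self, mul_zero, add_zero]
  rw [integral_mul_const, integral_rpow (Or.inl hμ), Real.one_rpow, Real.zero_rpow hμ']
  field_simp
  ring

theorem radialMean_pos (hμ : 0 ≤ μ) (hv : ContinuousOn v (Icc a b))
    (hpos : ∀ q ∈ Icc a b, 0 < v q) {p : ℝ} (hp : p ∈ Icc a b) : 0 < radialMean μ a v p := by
  refine intervalIntegral_pos_of_pos_on ?_ (fun t ht => ?_) one_pos
  · refine ContinuousOn.intervalIntegrable ?_
    rw [uIcc_of_le zero_le_one]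
    exact (Real.continuous_rpow_const hμ).continuousOn.mul
      (hv.comp (by fun_prop) fun t ht => add_mul_sub_mem_Icc hp ht)
  · exact mul_pos (Real.rpow_pos_of_pos ht.1 _)
      (hpos _ (add_mul_sub_mem_Icc hp ⟨ht.1.le, ht.2.le⟩))

theorem hasDerivAt_radialMean (hμ : 0 ≤ μ) {v' : ℝ → ℝ} (hv : ∀ q, HasDerivAt v (v' q) q)
    (hv' : Continuous v') {C : ℝ} (hC : ∀ q, |v' q| ≤ C) (p : ℝ) :
    HasDerivAt (radialMean μ a v) (radialMean (μ + 1) a v' p) p := by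
  have hvc : Continuous v := continuous_iff_continuousAt.2 fun q => (hv q).continuousAt
  have hF : ∀ x, Continuous fun t : ℝ => t ^ μ * v (a + t * (x - a)) := fun x =>
    (Real.continuous_rpow_const hμ).mul (hvc.comp (by fun_prop))
  have hF' : Continuous fun t : ℝ => t ^ (μ + 1) * v' (a + t * (p - a)) :=
    (Real.continuous_rpow_const (by linarith)).mul (hv'.comp (by fun_prop))
  refine (hasDerivAt_integral_of_dominated_loc_of_deriv_le (bound := fun _ => C)
    (F' := fun x t => t ^ (μ + 1) * v' (a + t * (x - a))) Filter.univ_mem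
    (Filter.Eventually.of_forall fun x => (hF x).aestronglyMeasurable)
    ((hF p).intervalIntegrable 0 1) hF'.aestronglyMeasurable ?_ intervalIntegrable_const ?_).2
  · refine Filter.Eventually.of_forall fun t ht x _ => ?_
    rw [uIoc_of_le zero_le_one] at ht
    have ht' : |t ^ (μ + 1)| ≤ 1 := by
      rw [abs_of_nonneg (Real.rpow_nonneg ht.1.le _)]
      exact Real.rpow_le_one ht.1.le ht.2 (by linarith)
    rw [Real.norm_eq_abs, abs_mul]
    simpa using mul_le_mul ht' (hC _) (abs_nonneg _) zero_le_one
  · refine Filter.Eventually.of_forall fun t ht x _ => ?_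
    rw [uIoc_of_le zero_le_one] at ht
    have hline : HasDerivAt (fun x : ℝ => a + t * (x - a)) t x := by
      simpa using (((hasDerivAt_id' x).sub_const a).const_mul t).const_add a
    refine (((hv _).comp x hline).const_mul (t ^ μ)).congr_deriv ?_
    rw [Real.rpow_add_one ht.1.ne']
    ring

theorem exists_hasDerivAt_eqOn_Icc (hab : a < b) (hv : ContDiffOn ℝ 1 v (Icc a b)) :
    ∃ w : ℝ → ℝ, EqOn w v (Icc a b) ∧
      ∀ q, HasDerivAt w (derivWithin v (Icc a b) (projIcc a b hab.le q)) q := by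
  set v' := derivWithin v (Icc a b)
  have hv'c : ContinuousOn v' (Icc a b) :=
    hv.continuousOn_derivWithin (uniqueDiffOn_Icc hab) le_rfl
  refine ⟨fun q => v a + ∫ x in a..q, v' (projIcc a b hab.le x), fun q hq => ?_, fun q =>
    ((hv'c.comp_projIcc hab.le).integral_hasStrictDerivAt a q).hasDerivAt.const_add (v a)⟩
  have hsub : Icc a q ⊆ Icc a b := Icc_subset_Icc_right hq.2
  have hproj : ∫ x in a..q, v' (projIcc a b hab.le x) = ∫ x in a..q, v' x :=
    integral_congr fun x hx => by
      rw [uIcc_of_le hq.1] at hx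
      simp [projIcc_of_mem _ (hsub hx)]
  have hFTC : ∫ x in a..q, v' x = v q - v a :=
    integral_eq_sub_of_hasDerivAt_of_le hq.1 (hv.continuousOn.mono hsub)
      (fun x hx => ((hv.differentiableOn one_ne_zero x
        (hsub (Ioo_subset_Icc_self hx))).hasDerivWithinAt.hasDerivAt
          (Icc_mem_nhds hx.1 (hx.2.trans_le hq.2))))
      ((hv'c.mono hsub).intervalIntegrable_of_Icc hq.1)
  simp only [hproj, hFTC]
  ring

theorem contDiffOn_radialMean (hab : a < b) {n : ℕ} (hμ : 0 ≤ μ)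
    (hv : ContDiffOn ℝ n v (Icc a b)) : ContDiffOn ℝ n (radialMean μ a v) (Icc a b) := by
  induction n generalizing μ v with
  | zero =>
    rw [Nat.cast_zero, contDiffOn_zero] at hv ⊢
    have hG : Continuous (radialMean μ a fun q => v (projIcc a b hab.le q)) :=
      continuous_parametric_intervalIntegral_of_continuous'
        (((Real.continuous_rpow_const hμ).comp continuous_snd).mul
          ((hv.comp_projIcc hab.le).comp (by fun_prop))) 0 1
    exact hG.continuousOn.congr (radialMean_congr fun q hq => by simp [projIcc_of_mem _ hq])
  | succ n ih =>
    have hud := uniqueDiffOn_Icc hab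
    have hv1 : ContDiffOn ℝ 1 v (Icc a b) := hv.of_le (by exact_mod_cast Nat.succ_pos n)
    obtain ⟨w, hwv, hw⟩ := exists_hasDerivAt_eqOn_Icc hab hv1
    set v' := derivWithin v (Icc a b)
    have hv'c : ContinuousOn v' (Icc a b) := hv1.continuousOn_derivWithin hud le_rfl
    obtain ⟨C, hC⟩ := isCompact_Icc.exists_bound_of_continuousOn hv'c
    have hderiv : ∀ p ∈ Icc a b,
        HasDerivWithinAt (radialMean μ a v) (radialMean (μ + 1) a v' p) (Icc a b) p := by
      intro p hp
      have hdw := hasDerivAt_radialMean (a := a) hμ hw (hv'c.comp_projIcc hab.le) (C := C)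
        (fun q => by simpa using hC _ (projIcc a b hab.le q).2) p
      rw [radialMean_congr (w := v') (fun q hq => by simp [projIcc_of_mem _ hq]) hp] at hdw
      exact hdw.hasDerivWithinAt.congr (radialMean_congr hwv.symm) (radialMean_congr hwv.symm hp)
    have hv'n : ContDiffOn ℝ n v' (Icc a b) := hv.derivWithin hud (by push_cast; exact le_rfl)
    rw [Nat.cast_succ, contDiffOn_succ_iff_derivWithin hud]
    refine ⟨fun p hp => (hderiv p hp).differentiableWithinAt, by simp, ?_⟩
    exact (ih (by linarith) hv'n).congr fun p hp => (hderiv p hp).derivWithin (hud p hp)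

end RadialMean

section Factorization

variable {a b ρ : ℝ} {F w : ℝ → ℝ}

theorem sub_eq_rpow_mul_radialMean (hρ : 1 ≤ ρ) (hw : ContinuousOn w (Icc a b))
    (hF : ∀ q ∈ Icc a b, HasDerivWithinAt F ((q - a) ^ (ρ - 1) * w q) (Icc a b) q)
    {p : ℝ} (hp : p ∈ Icc a b) : F p - F a = (p - a) ^ ρ * radialMean (ρ - 1) a w p := by
  set f : ℝ → ℝ := fun q => (q - a) ^ (ρ - 1) * w q
  have hsub : Icc a p ⊆ Icc a b := Icc_subset_Icc_right hp.2
  have hf : ContinuousOn f (Icc a b) :=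
    ((Real.continuous_rpow_const (by linarith)).comp (continuous_sub_right a)).continuousOn.mul hw
  have hFTC : ∫ q in a..p, f q = F p - F a :=
    integral_eq_sub_of_hasDerivAt_of_le hp.1
      (fun q hq => (hF q (hsub hq)).continuousWithinAt.mono hsub)
      (fun q hq => (hF q (hsub (Ioo_subset_Icc_self hq))).hasDerivAt
        (Icc_mem_nhds hq.1 (hq.2.trans_le hp.2)))
      ((hf.mono hsub).intervalIntegrable_of_Icc hp.1)
  rcases hp.1.eq_or_lt with rfl | hap
  · rw [sub_self, sub_self, Real.zero_rpow (by linarith), zero_mul]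
  have hpa : 0 < p - a := sub_pos.2 hap
  have hsubst : ∫ q in a..p, f q = (p - a) * ∫ t in (0 : ℝ)..1, f ((p - a) * t + a) := by
    rw [integral_comp_mul_add f hpa.ne', mul_zero, zero_add, mul_one, sub_add_cancel, smul_eq_mul,
      ← mul_assoc, mul_inv_cancel₀ hpa.ne', one_mul]
  have hint : ∫ t in (0 : ℝ)..1, f ((p - a) * t + a)
      = (p - a) ^ (ρ - 1) * radialMean (ρ - 1) a w p := by
    rw [radialMean, ← integral_const_mul]
    refine integral_congr fun t ht => ?_
    rw [uIcc_of_le zero_le_one] at ht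
    simp only [f, show (p - a) * t + a = a + t * (p - a) by ring, add_sub_cancel_left,
      Real.mul_rpow ht.1 hpa.le]
    ring
  have hpow : (p - a) * (p - a) ^ (ρ - 1) = (p - a) ^ ρ := by
    rw [Real.rpow_sub_one hpa.ne']
    field_simp
  rw [← hFTC, hsubst, hint, ← mul_assoc, hpow]

theorem sub_mul_derivWithin_radialMean (hab : a < b) (hρ : 1 ≤ ρ)
    (hw : ContDiffOn ℝ 1 w (Icc a b))
    (hF : ∀ q ∈ Icc a b, HasDerivWithinAt F ((q - a) ^ (ρ - 1) * w q) (Icc a b) q)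
    {p : ℝ} (hp : p ∈ Icc a b) :
    (p - a) * derivWithin (radialMean (ρ - 1) a w) (Icc a b) p
      = w p - ρ * radialMean (ρ - 1) a w p := by
  rcases hp.1.eq_or_lt with rfl | hap
  · rw [sub_self, zero_mul, radialMean_self (by linarith), sub_add_cancel]
    field_simp
    ring
  set g := radialMean (ρ - 1) a w
  set g' := derivWithin g (Icc a b) p
  have hpa : 0 < p - a := sub_pos.2 hap
  have hg : HasDerivWithinAt g g' (Icc a b) p :=
    ((contDiffOn_radialMean hab (by linarith) hw).differentiableOn one_ne_zero p
      hp).hasDerivWithinAt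
  have hpow : HasDerivAt (fun q => (q - a) ^ ρ) (ρ * (p - a) ^ (ρ - 1)) p := by
    simpa using ((hasDerivAt_id' p).sub_const a).rpow_const (Or.inr hρ)
  have hprod : HasDerivWithinAt F (ρ * (p - a) ^ (ρ - 1) * g p + (p - a) ^ ρ * g') (Icc a b) p :=
    ((hpow.hasDerivWithinAt.mul hg).const_add (F a)).congr
      (fun q hq => sub_eq_iff_eq_add'.1 (sub_eq_rpow_mul_radialMean hρ hw.continuousOn hF hq))
      (sub_eq_iff_eq_add'.1 (sub_eq_rpow_mul_radialMean hρ hw.continuousOn hF hp))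
  have heq := (uniqueDiffOn_Icc hab p hp).eq_deriv _ (hF p hp) hprod
  have hsplit : (p - a) ^ ρ = (p - a) ^ (ρ - 1) * (p - a) := by
    rw [Real.rpow_sub_one hpa.ne']
    field_simp
  refine mul_left_cancel₀ (Real.rpow_pos_of_pos hpa (ρ - 1)).ne' ?_
  linear_combination -heq - g' * hsplit

theorem isDiffeoOnto_rpow_one_div (hab : a < b) (hρ : 1 ≤ ρ) {n : ℕ} (hn : 1 ≤ n)
    (hw : ContDiffOn ℝ n w (Icc a b)) (hwpos : ∀ q ∈ Icc a b, 0 < w q)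
    (hF : ∀ q ∈ Icc a b, HasDerivWithinAt F ((q - a) ^ (ρ - 1) * w q) (Icc a b) q)
    (hFa : F a = 0) :
    IsDiffeoOnto (n + 1) (fun p => F p ^ (1 / ρ)) (Icc a b) (Icc 0 (F b ^ (1 / ρ))) := by
  set g := radialMean (ρ - 1) a w
  have hρ0 : ρ ≠ 0 := by linarith
  have hw1 : ContDiffOn ℝ 1 w (Icc a b) := hw.of_le (by exact_mod_cast hn)
  have hg : ContDiffOn ℝ n g (Icc a b) := contDiffOn_radialMean hab (by linarith) hw
  have hgpos : ∀ p ∈ Icc a b, 0 < g p := fun p hp =>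
    radialMean_pos (by linarith) hw.continuousOn hwpos hp
  have hφ : ∀ p ∈ Icc a b, F p ^ (1 / ρ) = (p - a) * g p ^ (1 / ρ) := by
    intro p hp
    have hfac := sub_eq_rpow_mul_radialMean hρ hw.continuousOn hF hp
    rw [hFa, sub_zero] at hfac
    rw [hfac, Real.mul_rpow (Real.rpow_nonneg (sub_nonneg.2 hp.1) _) (hgpos p hp).le,
      ← Real.rpow_mul (sub_nonneg.2 hp.1), mul_one_div_cancel hρ0, Real.rpow_one]
  have hderiv : ∀ p ∈ Icc a b, HasDerivWithinAt (fun p => F p ^ (1 / ρ))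
      (1 / ρ * w p * g p ^ (1 / ρ - 1)) (Icc a b) p := by
    intro p hp
    have hgd : HasDerivWithinAt g (derivWithin g (Icc a b) p) (Icc a b) p :=
      (hg.differentiableOn (by exact_mod_cast (zero_lt_one.trans_le hn).ne') p hp).hasDerivWithinAt
    refine ((((hasDerivAt_id' p).sub_const a).hasDerivWithinAt.mul
      (hgd.rpow_const (Or.inl (hgpos p hp).ne'))).congr hφ (hφ p hp)).congr_deriv ?_
    have hid : (p - a) * derivWithin g (Icc a b) p = w p - ρ * g p :=
      sub_mul_derivWithin_radialMean hab hρ hw1 hF hp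
    have hg0 := (hgpos p hp).ne'
    rw [Real.rpow_sub_one hg0]
    field_simp
    rw [hid]
    ring
  have hzero : F a ^ (1 / ρ) = 0 := by rw [hFa, Real.zero_rpow (one_div_ne_zero hρ0)]
  simpa only [hzero] using isDiffeoOnto_of_hasDerivWithinAt_pos hab hderiv
    ((contDiffOn_const.mul hw).mul (hg.rpow_const_of_ne fun p hp => (hgpos p hp).ne'))
    (fun p hp => mul_pos (mul_pos (by positivity) (hwpos p hp))
      (Real.rpow_pos_of_pos (hgpos p hp) _))

end Factorization

theorem isDiffeoOnto_sub_rpow_one_div {p₁ p₂ c ρ₁ ρ₂ : ℝ} {N : ℕ} {ψ ψt : ℝ → ℝ}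
    (hc : p₁ < c) (hc₂ : c < p₂) (hρ₁ : 1 ≤ ρ₁) (hN : 1 ≤ N)
    (hψt : ContDiffOn ℝ N ψt (Icc p₁ c)) (hψtpos : ∀ p ∈ Icc p₁ c, 0 < ψt p)
    (hψ : ∀ p ∈ Icc p₁ c, HasDerivWithinAt ψ
      ((p - p₁) ^ (ρ₁ - 1) * (p₂ - p) ^ (ρ₂ - 1) * ψt p) (Icc p₁ c) p) :
    IsDiffeoOnto (N + 1) (fun p => (ψ p - ψ p₁) ^ (1 / ρ₁)) (Icc p₁ c)
      (Icc 0 ((ψ c - ψ p₁) ^ (1 / ρ₁))) := by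
  have hbase : ∀ p ∈ Icc p₁ c, 0 < p₂ - p := fun p hp => by linarith [hp.2]
  refine isDiffeoOnto_rpow_one_div (w := fun p => (p₂ - p) ^ (ρ₂ - 1) * ψt p) hc hρ₁ hN
    (((contDiffOn_const.sub contDiffOn_id).rpow_const_of_ne fun p hp => (hbase p hp).ne').mul hψt)
    (fun p hp => mul_pos (Real.rpow_pos_of_pos (hbase p hp) _) (hψtpos p hp))
    (fun p hp => ((hψ p hp).sub_const (ψ p₁)).congr_deriv (by ring)) (sub_self _)

theorem statement12_general (p₁ p₂ : ℝ) (N : ℕ) (hN : 1 ≤ N)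
    (ρ₁ ρ₂ : ℝ) (hρ₁ : 1 ≤ ρ₁) (hρ₂ : 1 ≤ ρ₂)
    (ψ ψt : ℝ → ℝ)
    (hψ : ContDiffOn ℝ 1 ψ (Set.Icc p₁ p₂))
    (hψt : ContDiffOn ℝ N ψt (Set.Icc p₁ p₂))
    (hψtpos : ∀ p ∈ Set.Icc p₁ p₂, 0 < ψt p)
    (hψ' : ∀ p ∈ Set.Icc p₁ p₂,
      derivWithin ψ (Set.Icc p₁ p₂) p = (p - p₁) ^ (ρ₁ - 1) * (p₂ - p) ^ (ρ₂ - 1) * ψt p)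
    (η : ℝ) (hη : η ∈ Set.Ioo 0 ((p₂ - p₁) / 2)) :
    (ContDiffOn ℝ (N + 1) (fun p : ℝ => (ψ p - ψ p₁) ^ (1 / ρ₁)) (Set.Icc p₁ (p₂ - η)) ∧
      Set.BijOn (fun p : ℝ => (ψ p - ψ p₁) ^ (1 / ρ₁)) (Set.Icc p₁ (p₂ - η))
        (Set.Icc 0 ((ψ (p₂ - η) - ψ p₁) ^ (1 / ρ₁))) ∧
      ∀ p ∈ Set.Icc p₁ (p₂ - η),
        derivWithin (fun p : ℝ => (ψ p - ψ p₁) ^ (1 / ρ₁)) (Set.Icc p₁ (p₂ - η)) p ≠ 0) ∧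
    (ContDiffOn ℝ (N + 1) (fun p : ℝ => (ψ p₂ - ψ p) ^ (1 / ρ₂)) (Set.Icc (p₁ + η) p₂) ∧
      Set.BijOn (fun p : ℝ => (ψ p₂ - ψ p) ^ (1 / ρ₂)) (Set.Icc (p₁ + η) p₂)
        (Set.Icc 0 ((ψ p₂ - ψ (p₁ + η)) ^ (1 / ρ₂))) ∧
      ∀ p ∈ Set.Icc (p₁ + η) p₂,
        derivWithin (fun p : ℝ => (ψ p₂ - ψ p) ^ (1 / ρ₂)) (Set.Icc (p₁ + η) p₂) p ≠ 0) := by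
  obtain ⟨hη0, hη⟩ := hη
  have hψd : ∀ p ∈ Icc p₁ p₂, HasDerivWithinAt ψ
      ((p - p₁) ^ (ρ₁ - 1) * (p₂ - p) ^ (ρ₂ - 1) * ψt p) (Icc p₁ p₂) p := fun p hp =>
    hψ' p hp ▸ (hψ.differentiableOn one_ne_zero p hp).hasDerivWithinAt
  have hI₁ : Icc p₁ (p₂ - η) ⊆ Icc p₁ p₂ := Icc_subset_Icc_right (by linarith)
  have hneg : MapsTo Neg.neg (Icc (-p₂) (-(p₁ + η))) (Icc p₁ p₂) := fun q hq =>
    ⟨by linarith [hq.2], by linarith [hq.1]⟩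
  refine ⟨isDiffeoOnto_sub_rpow_one_div (by linarith) (by linarith) hρ₁ hN (hψt.mono hI₁)
    (fun p hp => hψtpos p (hI₁ hp)) (fun p hp => (hψd p (hI₁ hp)).mono hI₁), ?_⟩
  have hreflect := isDiffeoOnto_sub_rpow_one_div (p₂ := -p₁) (ρ₂ := ρ₁)
    (ψ := fun q => -ψ (-q)) (ψt := fun q => ψt (-q)) (by linarith) (by linarith) hρ₂ hN
    (hψt.comp contDiff_neg.contDiffOn hneg) (fun q hq => hψtpos _ (hneg hq))
    (fun q hq => ((hψd (-q) (hneg hq)).comp q (hasDerivWithinAt_neg q _) hneg).neg.congr_deriv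
      (by rw [show -q - p₁ = -p₁ - q by ring, show p₂ - -q = q - -p₂ by ring]; ring))
  have h₂ := hreflect.comp_neg
  simp only [neg_neg, neg_sub_neg] at h₂
  exact h₂

theorem statement12 (p₁ p₂ : ℝ) (hp : p₁ < p₂) (N : ℕ) (hN : 1 ≤ N)
    (ρ₁ ρ₂ : ℝ) (hρ₁ : 1 ≤ ρ₁) (hρ₂ : 1 ≤ ρ₂)
    (ψ ψt : ℝ → ℝ)
    (hψ : ContDiffOn ℝ 1 ψ (Set.Icc p₁ p₂))
    (hψt : ContDiffOn ℝ N ψt (Set.Icc p₁ p₂))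
    (hψtpos : ∀ p ∈ Set.Icc p₁ p₂, 0 < ψt p)
    (hψ' : ∀ p ∈ Set.Icc p₁ p₂,
      derivWithin ψ (Set.Icc p₁ p₂) p = (p - p₁) ^ (ρ₁ - 1) * (p₂ - p) ^ (ρ₂ - 1) * ψt p)
    (η : ℝ) (hη : η ∈ Set.Ioo 0 ((p₂ - p₁) / 2)) :
    (ContDiffOn ℝ (N + 1) (fun p : ℝ => (ψ p - ψ p₁) ^ (1 / ρ₁)) (Set.Icc p₁ (p₂ - η)) ∧
      Set.BijOn (fun p : ℝ => (ψ p - ψ p₁) ^ (1 / ρ₁)) (Set.Icc p₁ (p₂ - η))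
        (Set.Icc 0 ((ψ (p₂ - η) - ψ p₁) ^ (1 / ρ₁))) ∧
      ∀ p ∈ Set.Icc p₁ (p₂ - η),
        derivWithin (fun p : ℝ => (ψ p - ψ p₁) ^ (1 / ρ₁)) (Set.Icc p₁ (p₂ - η)) p ≠ 0) ∧
    (ContDiffOn ℝ (N + 1) (fun p : ℝ => (ψ p₂ - ψ p) ^ (1 / ρ₂)) (Set.Icc (p₁ + η) p₂) ∧
      Set.BijOn (fun p : ℝ => (ψ p₂ - ψ p) ^ (1 / ρ₂)) (Set.Icc (p₁ + η) p₂)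
        (Set.Icc 0 ((ψ p₂ - ψ (p₁ + η)) ^ (1 / ρ₂))) ∧
      ∀ p ∈ Set.Icc (p₁ + η) p₂,
        derivWithin (fun p : ℝ => (ψ p₂ - ψ p) ^ (1 / ρ₂)) (Set.Icc (p₁ + η) p₂) p ≠ 0) :=
  statement12_general p₁ p₂ N hN ρ₁ ρ₂ hρ₁ hρ₂ ψ ψt hψ hψt hψtpos hψ' η hη
end

section
/- Fix s_j > 0, ρ_j ≥ 1, μ_j ∈ (0,1], ω > 0 and j ∈ {1,2}. Then the sequence of functions φ_n^{(j)}(·,ω,ρ_j,μ_j) : (0,s_j] → ℂ, n ≥ 1, satisfies: (d/ds) φ₁^{(j)}(s,ω,ρ_j,μ_j) = s^{μ_j−1} e^{(−1)^{j+1} iω s^{ρ_j}} for all s ∈ (0,s_j], and for every integer n ≥ 1, (d/ds) φ_{n+1}^{(j)}(s,ω,ρ_j,μ_j) = φ_n^{(j)}(s,ω,ρ_j,μ_j) for all s ∈ (0,s_j]. -/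
/-!
STATEMENT 16: For fixed s_j > 0, ρ_j ≥ 1, μ_j ∈ (0,1], ω > 0 and j ∈ {1,2}, the sequence
φ_n^{(j)}(·,ω,ρ_j,μ_j) on (0,s_j] satisfies (d/ds) φ₁^{(j)}(s) = s^{μ_j−1} e^{(−1)^{j+1} iω s^{ρ_j}}
and (d/ds) φ_{n+1}^{(j)}(s) = φ_n^{(j)}(s) for every n ≥ 1.
(Here `phiE j n` denotes φ_{n+1}^{(j)}.)
-/
open MeasureTheory

/-!
On `Λ^{(j)}(s)` write `z = s + t e` with `e = edir j ρ`, so that the integrand of `φ_{n+1}` is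
`(t e)^n g(z) e` with `g(z) = z^{μ-1} exp(± i ω z^ρ)`. Along the ray `± arg z` stays in
`[0, π/(2ρ)]`, so Jordan's inequality `sin x ≥ 2x/π` gives
`|exp(± i ω z^ρ)| ≤ exp(-(2/π) ω a^{ρ-1} t)` for `s ≥ a`. This dominates the integrands locally
uniformly in `s`, so `φ_{n+1}` may be differentiated under the integral sign. As
`∂ₜ ((t e)^n g(z) e) = n e (t e)^{n-1} g(z) e + e ∂ₛ ((t e)^n g(z) e)`, integrating over `t > 0`
turns the integral of the `s`-derivative into `-n` times that of `(t e)^{n-1} g(z) e` plus the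
boundary term at `t = 0`, which is `-g(s)` for `n = 0` and vanishes for `n ≥ 1`.
-/

open Complex Real Set Filter Topology

namespace RayIntegral

noncomputable def rayPoint (j : ℕ) (ρ s t : ℝ) : ℂ := s + t * edir j ρ

noncomputable def kernel (j : ℕ) (ω ρ μ : ℝ) (z : ℂ) : ℂ :=
  z ^ ((μ : ℂ) - 1) * cexp (esgn j * I * ω * z ^ (ρ : ℂ))

noncomputable def kernelDeriv (j : ℕ) (ω ρ μ : ℝ) (z : ℂ) : ℂ :=
  (((μ : ℂ) - 1) * z ^ ((μ : ℂ) - 2) +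
      esgn j * I * ω * ρ * (z ^ ((μ : ℂ) - 1) * z ^ ((ρ : ℂ) - 1))) *
    cexp (esgn j * I * ω * z ^ (ρ : ℂ))

/-- The `s`-derivative of `phiInt j n s ω ρ μ t`. -/
noncomputable def phiIntDeriv (j n : ℕ) (s ω ρ μ t : ℝ) : ℂ :=
  (t * edir j ρ) ^ n * kernelDeriv j ω ρ μ (rayPoint j ρ s t) * edir j ρ

noncomputable def decayRate (ω ρ a : ℝ) : ℝ := 2 / π * ω * a ^ (ρ - 1)

lemma decayRate_pos {ω ρ a : ℝ} (hω : 0 < ω) (ha : 0 < a) : 0 < decayRate ω ρ a := by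
  unfold decayRate; positivity

lemma phiInt_eq_kernel (j n : ℕ) (s ω ρ μ t : ℝ) :
    phiInt j n s ω ρ μ t =
      (t * edir j ρ) ^ n * kernel j ω ρ μ (rayPoint j ρ s t) * edir j ρ := by
  rw [phiInt, kernel, rayPoint, add_sub_cancel_left, mul_assoc ((t * edir j ρ) ^ n)]

lemma esgn_eq_one_or_neg_one (j : ℕ) : esgn j = 1 ∨ esgn j = -1 := by
  unfold esgn; split <;> simp

lemma esgn_mul_self (j : ℕ) : esgn j * esgn j = 1 := by
  rcases esgn_eq_one_or_neg_one j with h | h <;> simp [h]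

lemma esgn_mul_sin (j : ℕ) (x : ℝ) : esgn j * Real.sin x = Real.sin (esgn j * x) := by
  rcases esgn_eq_one_or_neg_one j with h | h <;> simp [h]

lemma esgn_mul_arcsin (j : ℕ) (x : ℝ) : esgn j * arcsin (esgn j * x) = arcsin x := by
  rcases esgn_eq_one_or_neg_one j with h | h <;> simp [h]

lemma two_div_pi_mul_mul_sin_le_sin_mul {ρ φ : ℝ} (hρ : 0 ≤ ρ) (hφ : 0 ≤ φ)
    (hρφ : ρ * φ ≤ π / 2) : 2 / π * (ρ * Real.sin φ) ≤ Real.sin (ρ * φ) :=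
  calc 2 / π * (ρ * Real.sin φ) ≤ 2 / π * (ρ * φ) := by
        have := pi_pos; gcongr; exact sin_le hφ
    _ ≤ Real.sin (ρ * φ) := mul_le_sin (by positivity) hρφ

lemma two_div_pi_mul_im_le_im_cpow (j : ℕ) {z : ℂ} {ρ : ℝ} (hz : z ≠ 0) (hρ : 0 ≤ ρ)
    (harg₀ : 0 ≤ esgn j * arg z) (harg : ρ * (esgn j * arg z) ≤ π / 2) :
    2 / π * ρ * ‖z‖ ^ (ρ - 1) * (esgn j * z.im) ≤ esgn j * (z ^ (ρ : ℂ)).im := by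
  have hpow : ‖z‖ ^ (ρ - 1) * ‖z‖ = ‖z‖ ^ ρ := by
    rw [← rpow_add_one (norm_pos_iff.2 hz).ne']; norm_num
  rw [cpow_ofReal_im, ← norm_mul_sin_arg z]
  calc 2 / π * ρ * ‖z‖ ^ (ρ - 1) * (esgn j * (‖z‖ * Real.sin (arg z)))
      = ‖z‖ ^ (ρ - 1) * ‖z‖ * (2 / π * (ρ * Real.sin (esgn j * arg z))) := by
        rw [← esgn_mul_sin]; ring
    _ ≤ ‖z‖ ^ (ρ - 1) * ‖z‖ * Real.sin (ρ * (esgn j * arg z)) := by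
        gcongr; exact two_div_pi_mul_mul_sin_le_sin_mul hρ harg₀ harg
    _ = esgn j * (‖z‖ ^ ρ * Real.sin (arg z * ρ)) := by
        rw [hpow, mul_left_comm ρ, ← esgn_mul_sin, mul_comm ρ]; ring

section Ray

variable {j : ℕ} {ρ s t : ℝ}

lemma norm_edir : ‖edir j ρ‖ = 1 := by rw [edir, norm_exp_ofReal_mul_I]

lemma edir_ne_zero : edir j ρ ≠ 0 := Complex.exp_ne_zero _

lemma rayPoint_zero : rayPoint j ρ s 0 = s := by simp [rayPoint]

lemma edir_re : (edir j ρ).re = Real.cos (π / (2 * ρ)) := by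
  rw [edir, exp_ofReal_mul_I_re]
  rcases esgn_eq_one_or_neg_one j with h | h <;> simp [h]

lemma edir_im : (edir j ρ).im = esgn j * Real.sin (π / (2 * ρ)) := by
  rw [edir, exp_ofReal_mul_I_im, esgn_mul_sin]

lemma rayPoint_re : (rayPoint j ρ s t).re = s + t * Real.cos (π / (2 * ρ)) := by
  simp [rayPoint, edir_re]

lemma rayPoint_im : (rayPoint j ρ s t).im = esgn j * (t * Real.sin (π / (2 * ρ))) := by
  simp [rayPoint, edir_im]; ring

lemma cos_pi_div_two_mul_nonneg (hρ : 1 ≤ ρ) : 0 ≤ Real.cos (π / (2 * ρ)) := by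
  have := pi_pos
  refine cos_nonneg_of_mem_Icc ⟨by linarith [show 0 ≤ π / (2 * ρ) by positivity], ?_⟩
  rw [div_le_div_iff₀ (by positivity) two_pos]; nlinarith

lemma inv_le_sin_pi_div_two_mul (hρ : 1 ≤ ρ) : ρ⁻¹ ≤ Real.sin (π / (2 * ρ)) := by
  have := pi_pos
  calc ρ⁻¹ = 2 / π * (π / (2 * ρ)) := by field_simp
    _ ≤ Real.sin (π / (2 * ρ)) := mul_le_sin (by positivity) (by
        rw [div_le_div_iff₀ (by positivity) two_pos]; nlinarith)

lemma le_re_rayPoint (hρ : 1 ≤ ρ) (ht : 0 ≤ t) : s ≤ (rayPoint j ρ s t).re := by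
  rw [rayPoint_re]; linarith [mul_nonneg ht (cos_pi_div_two_mul_nonneg hρ)]

lemma le_norm_rayPoint_left (hρ : 1 ≤ ρ) (ht : 0 ≤ t) : s ≤ ‖rayPoint j ρ s t‖ :=
  (le_re_rayPoint hρ ht).trans (re_le_norm _)

lemma le_norm_rayPoint_right (hρ : 1 ≤ ρ) (hs : 0 ≤ s) (ht : 0 ≤ t) :
    t ≤ ‖rayPoint j ρ s t‖ := by
  refine (pow_le_pow_iff_left₀ ht (norm_nonneg _) two_ne_zero).1 ?_
  have hre : t * Real.cos (π / (2 * ρ)) ≤ (rayPoint j ρ s t).re := by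
    rw [rayPoint_re]; linarith
  have hcos : 0 ≤ t * Real.cos (π / (2 * ρ)) := mul_nonneg ht (cos_pi_div_two_mul_nonneg hρ)
  have him : (rayPoint j ρ s t).im * (rayPoint j ρ s t).im =
      (t * Real.sin (π / (2 * ρ))) ^ 2 := by
    rw [rayPoint_im]; linear_combination (t * Real.sin (π / (2 * ρ))) ^ 2 * esgn_mul_self j
  rw [Complex.sq_norm, normSq_apply, him]
  nlinarith [Real.sin_sq_add_cos_sq (π / (2 * ρ))]

lemma norm_rayPoint_le (hs : 0 ≤ s) (ht : 0 ≤ t) : ‖rayPoint j ρ s t‖ ≤ s + t := by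
  refine (norm_add_le _ _).trans ?_
  rw [norm_mul, norm_edir, norm_real, norm_real, Real.norm_of_nonneg hs, Real.norm_of_nonneg ht,
    mul_one]

lemma rayPoint_mem_slitPlane (hρ : 1 ≤ ρ) (hs : 0 < s) (ht : 0 ≤ t) :
    rayPoint j ρ s t ∈ slitPlane :=
  mem_slitPlane_iff.2 (.inl (hs.trans_le (le_re_rayPoint hρ ht)))

lemma rayPoint_ne_zero (hρ : 1 ≤ ρ) (hs : 0 < s) (ht : 0 ≤ t) : rayPoint j ρ s t ≠ 0 :=
  slitPlane_ne_zero (rayPoint_mem_slitPlane hρ hs ht)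

lemma esgn_mul_arg_rayPoint (hρ : 1 ≤ ρ) (hs : 0 < s) (ht : 0 ≤ t) :
    esgn j * arg (rayPoint j ρ s t) =
      arcsin (t * Real.sin (π / (2 * ρ)) / ‖rayPoint j ρ s t‖) := by
  rw [arg_of_re_nonneg (hs.le.trans (le_re_rayPoint hρ ht)), rayPoint_im, mul_div_assoc,
    esgn_mul_arcsin]

/-- The source of the exponential decay, uniform in `s ≥ a`, of every integrand along the ray. -/
lemma mul_le_esgn_mul_im_cpow_rayPoint (hρ : 1 ≤ ρ) {a : ℝ} (ha : 0 < a) (has : a ≤ s)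
    (ht : 0 ≤ t) :
    2 / π * a ^ (ρ - 1) * t ≤ esgn j * ((rayPoint j ρ s t) ^ (ρ : ℂ)).im := by
  have hs : 0 < s := ha.trans_le has
  have := pi_pos
  set z := rayPoint j ρ s t
  set θ := π / (2 * ρ) with hθ
  have hz₀ : z ≠ 0 := rayPoint_ne_zero hρ hs ht
  have hz : 0 < ‖z‖ := norm_pos_iff.2 hz₀
  have hsin : ρ⁻¹ ≤ Real.sin θ := inv_le_sin_pi_div_two_mul hρ
  have hsin₀ : 0 ≤ Real.sin θ := (inv_nonneg.2 (by linarith)).trans hsin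
  have harg₀ : 0 ≤ esgn j * arg z := by
    rw [esgn_mul_arg_rayPoint hρ hs ht]; exact arcsin_nonneg.2 (by positivity)
  have harg : esgn j * arg z ≤ θ := by
    rw [esgn_mul_arg_rayPoint hρ hs ht]
    calc arcsin (t * Real.sin θ / ‖z‖) ≤ arcsin (Real.sin θ) := by
          refine arcsin_le_arcsin ((div_le_iff₀ hz).2 ?_)
          nlinarith [le_norm_rayPoint_right (j := j) hρ hs.le ht]
      _ = θ := arcsin_sin (by linarith [show 0 ≤ θ by positivity]) (by
          rw [div_le_div_iff₀ (by positivity) two_pos]; nlinarith)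
  have hρθ : ρ * (esgn j * arg z) ≤ π / 2 :=
    (mul_le_mul_of_nonneg_left harg (by linarith)).trans_eq (by rw [hθ]; field_simp)
  calc 2 / π * a ^ (ρ - 1) * t = 2 / π * ρ * a ^ (ρ - 1) * (t * ρ⁻¹) := by field_simp
    _ ≤ 2 / π * ρ * ‖z‖ ^ (ρ - 1) * (t * Real.sin θ) := by
        gcongr
        exact has.trans (le_norm_rayPoint_left hρ ht)
    _ = 2 / π * ρ * ‖z‖ ^ (ρ - 1) * (esgn j * z.im) := by
        rw [rayPoint_im, ← mul_assoc (esgn j), esgn_mul_self, one_mul, mul_assoc]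
    _ ≤ esgn j * (z ^ (ρ : ℂ)).im :=
        two_div_pi_mul_im_le_im_cpow j hz₀ (by linarith) harg₀ hρθ

lemma norm_cexp_rayPoint_le (hρ : 1 ≤ ρ) {ω a : ℝ} (hω : 0 < ω) (ha : 0 < a)
    (has : a ≤ s) (ht : 0 ≤ t) :
    ‖cexp (esgn j * I * ω * (rayPoint j ρ s t) ^ (ρ : ℂ))‖ ≤
      Real.exp (-decayRate ω ρ a * t) := by
  have hre : (esgn j * I * ω * (rayPoint j ρ s t) ^ (ρ : ℂ)).re =
      -(ω * (esgn j * ((rayPoint j ρ s t) ^ (ρ : ℂ)).im)) := by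
    simp only [mul_re, mul_im, ofReal_re, ofReal_im, I_re, I_im]; ring
  rw [norm_exp, hre, Real.exp_le_exp, decayRate]
  nlinarith [mul_le_esgn_mul_im_cpow_rayPoint (j := j) hρ ha has ht]

end Ray

section Kernel

variable {j n : ℕ} {ω ρ μ : ℝ}

lemma hasDerivAt_kernel {z : ℂ} (hz : z ∈ slitPlane) :
    HasDerivAt (kernel j ω ρ μ) (kernelDeriv j ω ρ μ z) z := by
  have hpow := (hasDerivAt_id z).cpow_const (c := (μ : ℂ) - 1) hz
  have hexp := (((hasDerivAt_id z).cpow_const (c := (ρ : ℂ)) hz).const_mul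
    ((esgn j : ℂ) * I * ω)).cexp
  refine (hpow.mul hexp).congr_deriv ?_
  rw [kernelDeriv, show (μ : ℂ) - 2 = (μ : ℂ) - 1 - 1 by ring]
  simp only [id]
  ring

lemma continuousOn_kernelDeriv : ContinuousOn (kernelDeriv j ω ρ μ) slitPlane := by
  have hcpow (w : ℂ) : ContinuousOn (fun z : ℂ => z ^ w) slitPlane :=
    continuousOn_id.cpow_const fun _ h => h
  exact ((continuousOn_const.mul (hcpow _)).add
    (continuousOn_const.mul ((hcpow _).mul (hcpow _)))).mul
    (continuous_exp.comp_continuousOn (continuousOn_const.mul (hcpow _)))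

lemma norm_cpow_sub_le {z : ℂ} {x k a : ℝ} (ha : 0 < a) (hz : a ≤ ‖z‖) (hxk : x ≤ k) :
    ‖z ^ ((x : ℂ) - k)‖ ≤ a ^ (x - k) := by
  rw [← ofReal_sub, norm_cpow_real]
  exact rpow_le_rpow_of_nonpos ha hz (by linarith)

lemma norm_esgn_mul_I (j : ℕ) : ‖(esgn j : ℂ) * I‖ = 1 := by
  rcases esgn_eq_one_or_neg_one j with h | h <;> simp [h]

variable {s t a : ℝ}

lemma norm_kernel_rayPoint_le (hρ : 1 ≤ ρ) (hμ : μ ≤ 1) (hω : 0 < ω) (ha : 0 < a)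
    (has : a ≤ s) (ht : 0 ≤ t) :
    ‖kernel j ω ρ μ (rayPoint j ρ s t)‖ ≤
      a ^ (μ - 1) * Real.exp (-decayRate ω ρ a * t) := by
  rw [kernel, norm_mul, ← Nat.cast_one (R := ℂ), ← ofReal_natCast, Nat.cast_one]
  exact mul_le_mul (norm_cpow_sub_le ha (has.trans (le_norm_rayPoint_left hρ ht)) hμ)
    (norm_cexp_rayPoint_le hρ hω ha has ht) (norm_nonneg _) (by positivity)

lemma norm_kernelDeriv_rayPoint_le (hρ : 1 ≤ ρ) (hμ : μ ≤ 1) (hω : 0 < ω) {b : ℝ}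
    (ha : 0 < a) (has : a ≤ s) (hsb : s ≤ b) (ht : 0 ≤ t) :
    ‖kernelDeriv j ω ρ μ (rayPoint j ρ s t)‖ ≤
      (|μ - 1| * a ^ (μ - 2) + ρ * ω * (a ^ (μ - 1) * (b + t) ^ (ρ - 1))) *
        Real.exp (-decayRate ω ρ a * t) := by
  set z := rayPoint j ρ s t
  have haz : a ≤ ‖z‖ := has.trans (le_norm_rayPoint_left hρ ht)
  have hzb : ‖z‖ ≤ b + t := (norm_rayPoint_le (ha.trans_le has).le ht).trans (by linarith)
  have h₁ : ‖((μ : ℂ) - 1) * z ^ ((μ : ℂ) - 2)‖ ≤ |μ - 1| * a ^ (μ - 2) := by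
    rw [norm_mul, ← ofReal_one, ← ofReal_sub, norm_real, Real.norm_eq_abs]
    exact mul_le_mul_of_nonneg_left
      (by simpa using norm_cpow_sub_le (k := 2) ha haz (by linarith)) (abs_nonneg _)
  have h₂ : ‖(esgn j : ℂ) * I * ω * ρ * (z ^ ((μ : ℂ) - 1) * z ^ ((ρ : ℂ) - 1))‖ ≤
      ρ * ω * (a ^ (μ - 1) * (b + t) ^ (ρ - 1)) := by
    have hpow : ‖z ^ ((ρ : ℂ) - 1)‖ ≤ (b + t) ^ (ρ - 1) := by
      rw [← ofReal_one, ← ofReal_sub, norm_cpow_real]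
      exact rpow_le_rpow (norm_nonneg _) hzb (by linarith)
    rw [norm_mul, norm_mul, norm_mul, norm_esgn_mul_I, norm_real, norm_real, norm_mul,
      Real.norm_of_nonneg hω.le, Real.norm_of_nonneg (by linarith), one_mul, mul_comm ω]
    gcongr
    simpa using norm_cpow_sub_le (k := 1) ha haz hμ
  have hsum := (norm_add_le _ _).trans (add_le_add h₁ h₂)
  rw [kernelDeriv, norm_mul]
  exact mul_le_mul hsum (norm_cexp_rayPoint_le hρ hω ha has ht) (norm_nonneg _)
    ((norm_nonneg _).trans hsum)

end Kernel

lemma add_rpow_le_two_rpow_mul {b t r : ℝ} (hb : 0 ≤ b) (ht : 0 ≤ t) (hr : 0 ≤ r) :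
    (b + t) ^ r ≤ 2 ^ r * (b ^ r + t ^ r) := by
  rcases le_total b t with h | h
  · calc (b + t) ^ r ≤ (2 * t) ^ r := by gcongr; linarith
      _ ≤ 2 ^ r * (b ^ r + t ^ r) := by
        rw [mul_rpow zero_le_two ht]; gcongr; exact le_add_of_nonneg_left (by positivity)
  · calc (b + t) ^ r ≤ (2 * b) ^ r := by gcongr; linarith
      _ ≤ 2 ^ r * (b ^ r + t ^ r) := by
        rw [mul_rpow zero_le_two hb]; gcongr; exact le_add_of_nonneg_right (by positivity)

lemma integrableOn_pow_mul_exp_neg_mul (n : ℕ) {c : ℝ} (hc : 0 < c) :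
    IntegrableOn (fun t : ℝ => t ^ n * Real.exp (-c * t)) (Ioi 0) := by
  simpa using integrableOn_rpow_mul_exp_neg_mul_rpow (s := n)
    (by linarith [n.cast_nonneg (α := ℝ)]) one_pos hc

lemma integrableOn_pow_mul_add_rpow_mul_exp_neg_mul (n : ℕ) {b r c : ℝ} (hb : 0 ≤ b)
    (hr : 0 ≤ r) (hc : 0 < c) :
    IntegrableOn (fun t : ℝ => t ^ n * (b + t) ^ r * Real.exp (-c * t)) (Ioi 0) := by
  have hmaj : IntegrableOn (fun t : ℝ => 2 ^ r * b ^ r * (t ^ n * Real.exp (-c * t)) +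
      2 ^ r * (t ^ ((n : ℝ) + r) * Real.exp (-c * t))) (Ioi 0) := by
    have hpow : IntegrableOn (fun t : ℝ => t ^ ((n : ℝ) + r) * Real.exp (-c * t)) (Ioi 0) := by
      simpa using integrableOn_rpow_mul_exp_neg_mul_rpow (s := n + r)
        (by linarith [n.cast_nonneg (α := ℝ)]) one_pos hc
    exact ((integrableOn_pow_mul_exp_neg_mul n hc).const_mul _).add (hpow.const_mul _)
  refine hmaj.mono' (Continuous.aestronglyMeasurable (by fun_prop (disch := exact hr))) ?_
  filter_upwards [ae_restrict_mem measurableSet_Ioi] with t (ht : 0 < t)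
  rw [Real.norm_of_nonneg (by positivity), rpow_add ht, rpow_natCast]
  calc t ^ n * (b + t) ^ r * Real.exp (-c * t)
      ≤ t ^ n * (2 ^ r * (b ^ r + t ^ r)) * Real.exp (-c * t) := by
        gcongr; exact add_rpow_le_two_rpow_mul hb ht.le hr
    _ = _ := by ring

section PhiInt

variable {j n : ℕ} {ω ρ μ s t : ℝ}

lemma norm_mul_edir_pow_mul_mul_edir {w : ℂ} (ht : 0 ≤ t) :
    ‖((t : ℂ) * edir j ρ) ^ n * w * edir j ρ‖ = t ^ n * ‖w‖ := by
  rw [norm_mul, norm_mul, norm_pow, norm_mul, norm_edir, norm_real, Real.norm_of_nonneg ht]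
  ring

lemma hasDerivAt_phiInt_left (hρ : 1 ≤ ρ) (hs : 0 < s) (ht : 0 ≤ t) :
    HasDerivAt (fun s' => phiInt j n s' ω ρ μ t) (phiIntDeriv j n s ω ρ μ t) s := by
  have hk := ((hasDerivAt_kernel (j := j) (ω := ω) (ρ := ρ) (μ := μ)
    (rayPoint_mem_slitPlane hρ hs ht)).comp
    (s : ℂ) ((hasDerivAt_id (s : ℂ)).add_const ((t : ℂ) * edir j ρ))).comp_ofReal
  simp_rw [phiInt_eq_kernel]
  exact ((hk.const_mul (((t : ℂ) * edir j ρ) ^ n)).mul_const (edir j ρ)).congr_deriv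
    (by rw [phiIntDeriv, mul_one])

lemma hasDerivAt_phiInt_right (hρ : 1 ≤ ρ) (hs : 0 < s) (ht : 0 ≤ t) :
    HasDerivAt (phiInt j n s ω ρ μ)
      (n * edir j ρ * phiInt j (n - 1) s ω ρ μ t + edir j ρ * phiIntDeriv j n s ω ρ μ t)
      t := by
  have hpow := ((hasDerivAt_id (t : ℂ)).mul_const (edir j ρ)).pow n
  have hk := (hasDerivAt_kernel (j := j) (ω := ω) (ρ := ρ) (μ := μ)
    (rayPoint_mem_slitPlane hρ hs ht)).comp
    (t : ℂ) (((hasDerivAt_id (t : ℂ)).mul_const (edir j ρ)).const_add (s : ℂ))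
  have hphi : phiInt j n s ω ρ μ = fun t' : ℝ => ((t' : ℂ) * edir j ρ) ^ n *
      kernel j ω ρ μ (rayPoint j ρ s t') * edir j ρ := funext fun _ => phiInt_eq_kernel ..
  rw [hphi]
  refine ((hpow.mul hk).mul_const (edir j ρ)).comp_ofReal.congr_deriv ?_
  rw [phiInt_eq_kernel, phiIntDeriv]
  simp only [id, Pi.pow_apply, Function.comp_apply, rayPoint]
  ring

lemma continuousOn_phiIntDeriv (hρ : 1 ≤ ρ) (hs : 0 < s) :
    ContinuousOn (phiIntDeriv j n s ω ρ μ) (Ici 0) := by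
  have hray : ContinuousOn (rayPoint j ρ s) (Ici 0) := by unfold rayPoint; fun_prop
  refine ((Continuous.continuousOn (by fun_prop)).mul
    (continuousOn_kernelDeriv.comp hray fun t ht => rayPoint_mem_slitPlane hρ hs ht)).mul
    continuousOn_const

variable {a : ℝ}

lemma norm_phiInt_le (hρ : 1 ≤ ρ) (hμ : μ ≤ 1) (hω : 0 < ω) (ha : 0 < a) (has : a ≤ s)
    (ht : 0 ≤ t) :
    ‖phiInt j n s ω ρ μ t‖ ≤
      a ^ (μ - 1) * (t ^ n * Real.exp (-decayRate ω ρ a * t)) := by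
  rw [phiInt_eq_kernel, norm_mul_edir_pow_mul_mul_edir ht, mul_left_comm]
  exact mul_le_mul_of_nonneg_left (norm_kernel_rayPoint_le hρ hμ hω ha has ht) (by positivity)

lemma norm_phiIntDeriv_le (hρ : 1 ≤ ρ) (hμ : μ ≤ 1) (hω : 0 < ω) {b : ℝ} (ha : 0 < a)
    (has : a ≤ s) (hsb : s ≤ b) (ht : 0 ≤ t) :
    ‖phiIntDeriv j n s ω ρ μ t‖ ≤
      |μ - 1| * a ^ (μ - 2) * (t ^ n * Real.exp (-decayRate ω ρ a * t)) +
        ρ * ω * a ^ (μ - 1) *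
          (t ^ n * (b + t) ^ (ρ - 1) * Real.exp (-decayRate ω ρ a * t)) := by
  rw [phiIntDeriv, norm_mul_edir_pow_mul_mul_edir ht]
  calc t ^ n * ‖kernelDeriv j ω ρ μ (rayPoint j ρ s t)‖
      ≤ t ^ n * ((|μ - 1| * a ^ (μ - 2) + ρ * ω * (a ^ (μ - 1) * (b + t) ^ (ρ - 1))) *
        Real.exp (-decayRate ω ρ a * t)) :=
        mul_le_mul_of_nonneg_left (norm_kernelDeriv_rayPoint_le hρ hμ hω ha has hsb ht)
          (by positivity)
    _ = _ := by ring

end PhiInt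

section Integral

variable {j n : ℕ} {ω ρ μ s : ℝ}

lemma integrableOn_phiInt (hρ : 1 ≤ ρ) (hμ : μ ≤ 1) (hω : 0 < ω) (hs : 0 < s) :
    IntegrableOn (phiInt j n s ω ρ μ) (Ioi 0) := by
  have hcont : ContinuousOn (phiInt j n s ω ρ μ) (Ioi 0) := fun t ht =>
    (hasDerivAt_phiInt_right hρ hs (le_of_lt ht)).continuousAt.continuousWithinAt
  refine ((integrableOn_pow_mul_exp_neg_mul n (decayRate_pos (ρ := ρ) hω hs)).const_mul
    (s ^ (μ - 1))).mono' (hcont.aestronglyMeasurable measurableSet_Ioi) ?_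
  filter_upwards [ae_restrict_mem measurableSet_Ioi] with t (ht : 0 < t)
  exact norm_phiInt_le hρ hμ hω hs le_rfl ht.le

lemma tendsto_phiInt_atTop (hρ : 1 ≤ ρ) (hμ : μ ≤ 1) (hω : 0 < ω) (hs : 0 < s) :
    Tendsto (phiInt j n s ω ρ μ) atTop (𝓝 0) := by
  have hdecay := (tendsto_rpow_mul_exp_neg_mul_atTop_nhds_zero n _
    (decayRate_pos (ρ := ρ) hω hs)).const_mul (s ^ (μ - 1))
  simp only [rpow_natCast, mul_zero] at hdecay
  refine squeeze_zero_norm' ?_ hdecay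
  filter_upwards [eventually_ge_atTop 0] with t ht
  exact norm_phiInt_le hρ hμ hω hs le_rfl ht

lemma hasDerivAt_integral_phiInt (hρ : 1 ≤ ρ) (hμ : μ ≤ 1) (hω : 0 < ω) (hs : 0 < s) :
    IntegrableOn (phiIntDeriv j n s ω ρ μ) (Ioi 0) ∧
      HasDerivAt (fun s' => ∫ t in Ioi 0, phiInt j n s' ω ρ μ t)
        (∫ t in Ioi 0, phiIntDeriv j n s ω ρ μ t) s := by
  have ha : 0 < s / 2 := half_pos hs
  have hball : ∀ s' ∈ Metric.ball s (s / 2), s / 2 ≤ s' ∧ s' ≤ 2 * s := fun s' hs' => by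
    rw [Metric.mem_ball, Real.dist_eq, abs_lt] at hs'
    constructor <;> linarith
  have hc := decayRate_pos (ρ := ρ) hω ha
  refine hasDerivAt_integral_of_dominated_loc_of_deriv_le (Metric.ball_mem_nhds s ha)
    (F := fun s' t => phiInt j n s' ω ρ μ t) (F' := fun s' t => phiIntDeriv j n s' ω ρ μ t)
    (bound := fun t =>
      |μ - 1| * (s / 2) ^ (μ - 2) * (t ^ n * Real.exp (-decayRate ω ρ (s / 2) * t)) +
      ρ * ω * (s / 2) ^ (μ - 1) *
        (t ^ n * (2 * s + t) ^ (ρ - 1) * Real.exp (-decayRate ω ρ (s / 2) * t)))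
    ?_ (integrableOn_phiInt hρ hμ hω hs)
    ((continuousOn_phiIntDeriv hρ hs).mono Ioi_subset_Ici_self
      |>.aestronglyMeasurable measurableSet_Ioi) ?_
    (((integrableOn_pow_mul_exp_neg_mul n hc).const_mul _).add
      ((integrableOn_pow_mul_add_rpow_mul_exp_neg_mul n (by linarith) (by linarith) hc).const_mul
        _)) ?_
  · filter_upwards [Metric.ball_mem_nhds s ha] with s' hs'
    exact (integrableOn_phiInt hρ hμ hω (ha.trans_le (hball s' hs').1)).aestronglyMeasurable
  · filter_upwards [ae_restrict_mem measurableSet_Ioi] with t (ht : 0 < t) s' hs'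
    exact norm_phiIntDeriv_le hρ hμ hω ha (hball s' hs').1 (hball s' hs').2 ht.le
  · filter_upwards [ae_restrict_mem measurableSet_Ioi] with t (ht : 0 < t) s' hs'
    exact hasDerivAt_phiInt_left hρ (ha.trans_le (hball s' hs').1) ht.le

/-- Integration by parts in `t` (`hasDerivAt_phiInt_right`); the boundary term at `∞` vanishes. -/
lemma edir_mul_integral_phiIntDeriv (hρ : 1 ≤ ρ) (hμ : μ ≤ 1) (hω : 0 < ω) (hs : 0 < s) :
    edir j ρ * ∫ t in Ioi 0, phiIntDeriv j n s ω ρ μ t =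
      -phiInt j n s ω ρ μ 0 - n * edir j ρ * ∫ t in Ioi 0, phiInt j (n - 1) s ω ρ μ t := by
  have hint₁ := (integrableOn_phiInt (j := j) (n := n - 1) hρ hμ hω hs).const_mul
    ((n : ℂ) * edir j ρ)
  have hint₂ := (hasDerivAt_integral_phiInt (j := j) (n := n) hρ hμ hω hs).1.const_mul
    (edir j ρ)
  have h := integral_Ioi_of_hasDerivAt_of_tendsto
    (hasDerivAt_phiInt_right hρ hs le_rfl).continuousAt.continuousWithinAt
    (fun t ht => hasDerivAt_phiInt_right hρ hs (le_of_lt ht)) (hint₁.add hint₂)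
    (tendsto_phiInt_atTop hρ hμ hω hs)
  rw [integral_add hint₁ hint₂, integral_const_mul, integral_const_mul] at h
  linear_combination h

lemma integral_phiIntDeriv_zero (hρ : 1 ≤ ρ) (hμ : μ ≤ 1) (hω : 0 < ω) (hs : 0 < s) :
    ∫ t in Ioi 0, phiIntDeriv j 0 s ω ρ μ t = -kernel j ω ρ μ s := by
  have h := edir_mul_integral_phiIntDeriv (j := j) (n := 0) hρ hμ hω hs
  rw [phiInt_eq_kernel, rayPoint_zero] at h
  refine mul_left_cancel₀ (edir_ne_zero (j := j) (ρ := ρ)) ?_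
  linear_combination h

lemma integral_phiIntDeriv_succ (hρ : 1 ≤ ρ) (hμ : μ ≤ 1) (hω : 0 < ω) (hs : 0 < s)
    (m : ℕ) :
    ∫ t in Ioi 0, phiIntDeriv j (m + 1) s ω ρ μ t =
      -(m + 1) * ∫ t in Ioi 0, phiInt j m s ω ρ μ t := by
  have h := edir_mul_integral_phiIntDeriv (j := j) (n := m + 1) hρ hμ hω hs
  rw [phiInt_eq_kernel, Nat.add_sub_cancel] at h
  refine mul_left_cancel₀ (edir_ne_zero (j := j) (ρ := ρ)) ?_
  push_cast at h
  linear_combination h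

lemma hasDerivAt_phiE (hρ : 1 ≤ ρ) (hμ : μ ≤ 1) (hω : 0 < ω) (hs : 0 < s) (n : ℕ) :
    HasDerivAt (fun s' => phiE j n s' ω ρ μ)
      ((-1) ^ (n + 1) / n.factorial * ∫ t in Ioi 0, phiIntDeriv j n s ω ρ μ t) s :=
  (hasDerivAt_integral_phiInt hρ hμ hω hs).2.const_mul _

end Integral

end RayIntegral

theorem statement16_general (sj ρ μ ω : ℝ) (hρ : 1 ≤ ρ)
    (hμ : μ ∈ Set.Ioc (0 : ℝ) 1) (hω : 0 < ω) (j : ℕ) :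
    (∀ s ∈ Set.Ioc (0 : ℝ) sj,
      HasDerivAt (fun s' : ℝ => phiE j 0 s' ω ρ μ)
        (((s ^ (μ - 1) : ℝ) : ℂ) *
          Complex.exp ((esgn j : ℂ) * Complex.I * (ω : ℂ) * ((s : ℂ) ^ (ρ : ℂ)))) s) ∧
    (∀ n : ℕ, 1 ≤ n → ∀ s ∈ Set.Ioc (0 : ℝ) sj,
      HasDerivAt (fun s' : ℝ => phiE j n s' ω ρ μ) (phiE j (n - 1) s ω ρ μ) s) := by
  refine ⟨fun s hs => ?_, fun n hn s hs => ?_⟩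
  · convert RayIntegral.hasDerivAt_phiE hρ hμ.2 hω hs.1 0 using 1
    rw [RayIntegral.integral_phiIntDeriv_zero hρ hμ.2 hω hs.1, RayIntegral.kernel,
      ofReal_cpow hs.1.le]
    push_cast
    ring
  · obtain ⟨m, rfl⟩ := Nat.exists_eq_add_of_le' hn
    convert RayIntegral.hasDerivAt_phiE hρ hμ.2 hω hs.1 (m + 1) using 1
    rw [RayIntegral.integral_phiIntDeriv_succ hρ hμ.2 hω hs.1, phiE, Nat.add_sub_cancel,
      Nat.factorial_succ]
    push_cast
    field_simp
    ring

theorem statement16 (sj ρ μ ω : ℝ) (hsj : 0 < sj) (hρ : 1 ≤ ρ)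
    (hμ : μ ∈ Set.Ioc (0 : ℝ) 1) (hω : 0 < ω) (j : ℕ) (hj : j = 1 ∨ j = 2) :
    (∀ s ∈ Set.Ioc (0 : ℝ) sj,
      HasDerivAt (fun s' : ℝ => phiE j 0 s' ω ρ μ)
        (((s ^ (μ - 1) : ℝ) : ℂ) *
          Complex.exp ((esgn j : ℂ) * Complex.I * (ω : ℂ) * ((s : ℂ) ^ (ρ : ℂ)))) s) ∧
    (∀ n : ℕ, 1 ≤ n → ∀ s ∈ Set.Ioc (0 : ℝ) sj,
      HasDerivAt (fun s' : ℝ => phiE j n s' ω ρ μ) (phiE j (n - 1) s ω ρ μ) s) :=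
  statement16_general sj ρ μ ω hρ hμ hω j
end
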